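/- arXiv:1207.0725 — 11 statements merged into one kernel-verified Lean document; each statement's English description precedes it below -/
import Mathlib

section
/- Let q > 0, z > 0, and let f : (0, ∞) → ℝ be measurable and nonnegative. Then ∫_ℝ q·e^{−2q|w|} · (∫_z^{z·e^{−2w}} f(t) dt) dw = ∫_0^∞ K((1/2)·ln(z/t)) · f(t) dt, where K(y) := −sign(y)·(1/2)·e^{−2q|y|}, and where for a < b the expression ∫_b^a f means −∫_a^b f. (Both sides may simultaneously be interpreted as extended-real integrals of the positive and negative parts, or the identity may be stated under the integrability hypothesis ∫_0^∞ min(t, 1/t)^q · f(t) dt < ∞.) -/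
open MeasureTheory intervalIntegral

noncomputable def laplaceKernel (q y : ℝ) : ℝ :=
  -Real.sign y * (1 / 2) * Real.exp (-(2 * q * |y|))

/-!
Writing `∫ t in z..z * exp (-2 w), f t` as `±∫` over `Ι z (z * exp (-2 w))` turns the left side
into a double integral in `(w, t)`. For fixed `t > 0` put `y = ½ log (z / t)`: then `t` lies
between `z` and `z e^{-2w}` exactly when `w` lies beyond `y` (`w ≤ y < 0` or `0 ≤ y < w`), so
integrating the Laplace density over `w` leaves the tail mass `½ e^{-2q|y|}` with sign `-sign y`,
which is `K(y)`. Fubini applies because this tail mass is at most `e^{q |log z|} min(t, 1/t)^q`.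
-/

open Real Set
open scoped Interval

namespace FrischLloyd

variable {q : ℝ}

noncomputable def laplaceDensity (q w : ℝ) : ℝ := q * exp (-(2 * q * |w|))

lemma laplaceDensity_nonneg (hq : 0 ≤ q) (w : ℝ) : 0 ≤ laplaceDensity q w :=
  mul_nonneg hq (exp_pos _).le

lemma integral_laplaceDensity_Ioi (hq : 0 < q) {y : ℝ} (hy : 0 ≤ y) :
    ∫ w in Ioi y, laplaceDensity q w = exp (-(2 * q * y)) / 2 := by
  have hρ : EqOn (laplaceDensity q) (fun w => q * exp (-(2 * q) * w)) (Ioi y) := fun w hw => by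
    simp only [laplaceDensity, abs_of_pos (hy.trans_lt hw), neg_mul]
  rw [setIntegral_congr_fun measurableSet_Ioi hρ, MeasureTheory.integral_const_mul,
    integral_exp_mul_Ioi (by linarith)]
  field_simp

lemma integral_laplaceDensity_Iic (hq : 0 < q) {y : ℝ} (hy : y ≤ 0) :
    ∫ w in Iic y, laplaceDensity q w = exp (2 * q * y) / 2 := by
  have hρ : EqOn (laplaceDensity q) (fun w => q * exp (2 * q * w)) (Iic y) := fun w hw => by
    simp only [laplaceDensity, abs_of_nonpos (le_trans hw hy), mul_neg, neg_neg]
  rw [setIntegral_congr_fun measurableSet_Iic hρ, MeasureTheory.integral_const_mul,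
    integral_exp_mul_Iic (by linarith)]
  field_simp

lemma integral_laplaceDensity (hq : 0 < q) : ∫ w, laplaceDensity q w = 1 := by
  have hρ : ∀ w, laplaceDensity q |w| = laplaceDensity q w := fun w => by
    simp only [laplaceDensity, abs_abs]
  rw [← integral_congr_ae (.of_forall hρ), integral_comp_abs,
    integral_laplaceDensity_Ioi hq le_rfl]
  simp

lemma integrable_laplaceDensity (hq : 0 < q) : Integrable (laplaceDensity q) :=
  .of_integral_ne_zero (by simp [integral_laplaceDensity hq])

noncomputable def signedTail (y w : ℝ) : ℝ :=
  if y < 0 then (Iic y).indicator 1 w else -(Ioi y).indicator 1 w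

lemma sign_mul_indicator_uIoc_eq_signedTail {z : ℝ} (hz : 0 < z) (y w : ℝ) :
    (if z ≤ z * exp (-(2 * w)) then 1 else -1) *
      (Ι z (z * exp (-(2 * w)))).indicator 1 (z * exp (-(2 * y))) = signedTail y w := by
  have hσ : z ≤ z * exp (-(2 * w)) ↔ w ≤ 0 := by
    rw [le_mul_iff_one_le_right hz, one_le_exp_iff]; constructor <;> intro h <;> linarith
  have hmem : z * exp (-(2 * y)) ∈ Ι z (z * exp (-(2 * w))) ↔
      y < 0 ∧ w ≤ y ∨ y < w ∧ 0 ≤ y := by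
    simp only [mem_uIoc, lt_mul_iff_one_lt_right hz, mul_le_iff_le_one_right hz,
      mul_lt_mul_iff_right₀ hz, mul_le_mul_iff_right₀ hz, one_lt_exp_iff, exp_le_one_iff,
      exp_lt_exp, exp_le_exp]
    grind
  classical
  simp only [signedTail, indicator_apply, hmem, hσ, mem_Iic, mem_Ioi, Pi.one_apply]
  split_ifs <;> grind

lemma integral_laplaceDensity_mul_signedTail (hq : 0 < q) {y : ℝ} (hy : y ≠ 0) :
    ∫ w, laplaceDensity q w * signedTail y w = laplaceKernel q y := by
  have hρ : ∀ (s : Set ℝ) w,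
      laplaceDensity q w * s.indicator 1 w = s.indicator (laplaceDensity q) w :=
    fun s w => by by_cases hw : w ∈ s <;> simp [hw]
  rcases hy.lt_or_gt with hy | hy
  · simp only [signedTail, if_pos hy, hρ, MeasureTheory.integral_indicator measurableSet_Iic,
      integral_laplaceDensity_Iic hq hy.le, laplaceKernel, sign_of_neg hy, abs_of_neg hy]
    ring_nf
  · simp only [signedTail, if_neg hy.not_gt, mul_neg, hρ, MeasureTheory.integral_neg,
      MeasureTheory.integral_indicator measurableSet_Ioi, integral_laplaceDensity_Ioi hq hy.le,
      laplaceKernel, sign_of_pos hy, abs_of_pos hy]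
    ring

lemma integral_laplaceDensity_mul_abs_signedTail (hq : 0 < q) (y : ℝ) :
    ∫ w, laplaceDensity q w * |signedTail y w| = exp (-(2 * q * |y|)) / 2 := by
  have hρ : ∀ (s : Set ℝ) w,
      laplaceDensity q w * |s.indicator 1 w| = s.indicator (laplaceDensity q) w :=
    fun s w => by by_cases hw : w ∈ s <;> simp [hw]
  rcases lt_or_ge y 0 with hy | hy
  · simp only [signedTail, if_pos hy, hρ, MeasureTheory.integral_indicator measurableSet_Iic,
      integral_laplaceDensity_Iic hq hy.le, abs_of_neg hy]
    ring_nf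
  · simp only [signedTail, if_neg hy.not_gt, abs_neg, hρ,
      MeasureTheory.integral_indicator measurableSet_Ioi, integral_laplaceDensity_Ioi hq hy,
      abs_of_nonneg hy]

variable {z : ℝ} {f : ℝ → ℝ}

noncomputable def integrand (q z : ℝ) (f : ℝ → ℝ) (w t : ℝ) : ℝ :=
  laplaceDensity q w * ((if z ≤ z * exp (-(2 * w)) then 1 else -1) *
    (Ι z (z * exp (-(2 * w)))).indicator f t)

lemma integral_integrand_eq_mul_intervalIntegral (w : ℝ) :
    ∫ t, integrand q z f w t = laplaceDensity q w * ∫ t in z..z * exp (-(2 * w)), f t := by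
  simp only [integrand, MeasureTheory.integral_const_mul, intervalIntegral_eq_integral_uIoc,
    MeasureTheory.integral_indicator measurableSet_uIoc, smul_eq_mul]

lemma integrand_of_nonpos (hz : 0 < z) {t : ℝ} (ht : t ≤ 0) (w : ℝ) :
    integrand q z f w t = 0 := by
  have : t ∉ Ι z (z * exp (-(2 * w))) := fun h => by
    have := mul_pos hz (exp_pos (-(2 * w)))
    rcases mem_uIoc.1 h with h | h <;> linarith [h.1]
  simp [integrand, indicator_of_notMem this]

lemma integrand_of_pos (hz : 0 < z) {t : ℝ} (ht : 0 < t) (w : ℝ) :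
    integrand q z f w t = laplaceDensity q w * signedTail (1 / 2 * log (z / t)) w * f t := by
  have hzt : z * exp (-(2 * (1 / 2 * log (z / t)))) = t := by
    rw [show -(2 * (1 / 2 * log (z / t))) = -log (z / t) by ring, exp_neg,
      exp_log (div_pos hz ht)]
    field_simp
  rw [← sign_mul_indicator_uIoc_eq_signedTail hz, hzt]
  classical
  simp only [integrand, indicator_apply, Pi.one_apply]
  split_ifs <;> ring

lemma measurable_integrand (hf : Measurable f) :
    Measurable (Function.uncurry (integrand q z f)) := by
  have hb : Measurable fun p : ℝ × ℝ => z * exp (-(2 * p.1)) := by fun_prop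
  have hI : MeasurableSet {p : ℝ × ℝ | p.2 ∈ Ι z (z * exp (-(2 * p.1)))} :=
    (measurableSet_lt (measurable_const.min hb) measurable_snd).inter
      (measurableSet_le measurable_snd (measurable_const.max hb))
  have hσ : Measurable fun p : ℝ × ℝ =>
      if z ≤ z * exp (-(2 * p.1)) then (1 : ℝ) else -1 :=
    Measurable.ite (measurableSet_le measurable_const hb) measurable_const measurable_const
  have hρ : Measurable fun p : ℝ × ℝ => laplaceDensity q p.1 := by
    unfold laplaceDensity; fun_prop
  exact hρ.mul (hσ.mul ((hf.comp measurable_snd).indicator hI))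

lemma integral_integrand_eq_laplaceKernel_mul (hq : 0 < q) (hz : 0 < z) {t : ℝ} (ht : 0 < t)
    (htz : t ≠ z) :
    ∫ w, integrand q z f w t = laplaceKernel q (1 / 2 * log (z / t)) * f t := by
  have hy : 1 / 2 * log (z / t) ≠ 0 := mul_ne_zero (by norm_num) <|
    log_ne_zero_of_pos_of_ne_one (div_pos hz ht) (by rwa [ne_eq, div_eq_one_iff_eq ht.ne', eq_comm])
  simp_rw [integrand_of_pos hz ht]
  rw [MeasureTheory.integral_mul_const, integral_laplaceDensity_mul_signedTail hq hy]

lemma integral_norm_integrand (hq : 0 < q) (hz : 0 < z) {t : ℝ} (ht : 0 < t) :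
    ∫ w, ‖integrand q z f w t‖ = exp (-(2 * q * |1 / 2 * log (z / t)|)) / 2 * |f t| := by
  simp_rw [integrand_of_pos hz ht, norm_mul, Real.norm_eq_abs,
    abs_of_nonneg (laplaceDensity_nonneg hq.le _)]
  rw [MeasureTheory.integral_mul_const, integral_laplaceDensity_mul_abs_signedTail hq]

lemma min_self_inv_rpow {t : ℝ} (ht : 0 < t) (q : ℝ) :
    min t t⁻¹ ^ q = exp (-(q * |log t|)) := by
  have hmin : min t t⁻¹ = exp (-|log t|) := by
    rw [← exp_log ht, log_exp, ← exp_neg, ← Real.exp_monotone.map_min]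
    congr 1
    rcases le_total 0 (log t) with h | h
    · simp [abs_of_nonneg h, h]
    · simp [abs_of_nonpos h, h]
  rw [hmin, ← exp_mul]
  ring_nf

lemma exp_neg_abs_log_div_le (hq : 0 ≤ q) (hz : 0 < z) {t : ℝ} (ht : 0 < t) :
    exp (-(2 * q * |1 / 2 * log (z / t)|)) ≤ exp (q * |log z|) * min t t⁻¹ ^ q := by
  rw [min_self_inv_rpow ht, ← exp_add, exp_le_exp, log_div hz.ne' ht.ne']
  have := mul_le_mul_of_nonneg_left (abs_sub_abs_le_abs_sub (log t) (log z)) hq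
  rw [abs_sub_comm] at this
  rw [abs_mul, abs_of_pos (by norm_num : (0 : ℝ) < 1 / 2)]
  linarith

lemma integrable_integrand (hq : 0 < q) (hz : 0 < z) (hf : Measurable f)
    (hf_nonneg : ∀ t ∈ Ioi (0 : ℝ), 0 ≤ f t)
    (hint : IntegrableOn (fun t => min t t⁻¹ ^ q * f t) (Ioi 0)) :
    Integrable (Function.uncurry (integrand q z f)) (volume.prod volume) := by
  have hG := measurable_integrand (q := q) (z := z) hf
  rw [integrable_prod_iff' hG.aestronglyMeasurable]
  constructor
  · refine .of_forall fun t => ((integrable_laplaceDensity hq).mul_const |f t|).mono'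
      (hG.comp (measurable_id.prodMk measurable_const)).aestronglyMeasurable
      (.of_forall fun w => ?_)
    have hσ : ‖(if z ≤ z * exp (-(2 * w)) then 1 else -1 : ℝ)‖ = 1 := by split_ifs <;> simp
    simp only [Function.uncurry_apply_pair, integrand, norm_mul, hσ, one_mul, Real.norm_eq_abs,
      abs_of_nonneg (laplaceDensity_nonneg hq.le w)]
    exact mul_le_mul_of_nonneg_left (norm_indicator_le_norm_self f t)
      (laplaceDensity_nonneg hq.le w)
  · refine ((integrable_indicator_iff measurableSet_Ioi).2
      (hint.const_mul (exp (q * |log z|)))).mono'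
      hG.norm.stronglyMeasurable.integral_prod_left'.aestronglyMeasurable (.of_forall fun t => ?_)
    rcases le_or_gt t 0 with ht | ht
    · simp [integrand_of_nonpos hz ht, indicator_of_notMem (show t ∉ Ioi 0 from not_lt.2 ht)]
    · simp only [Function.uncurry_apply_pair, integral_norm_integrand hq hz ht,
        indicator_of_mem (show t ∈ Ioi 0 from ht), abs_of_nonneg (hf_nonneg t ht)]
      have hft := hf_nonneg t ht
      rw [Real.norm_of_nonneg (by positivity), ← mul_assoc]
      gcongr
      linarith [exp_neg_abs_log_div_le hq.le hz ht, exp_pos (-(2 * q * |1 / 2 * log (z / t)|))]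

end FrischLloyd

/-- **Convolution form of the Frisch–Lloyd integral term.**
For `q > 0`, `z > 0` and a nonnegative measurable `f` with
`∫_0^∞ min(t, 1/t)^q f(t) dt < ∞`,
`∫_ℝ q e^{-2q|w|} (∫_z^{z e^{-2w}} f) dw = ∫_0^∞ K(½ ln(z/t)) f(t) dt`. -/
theorem frisch_lloyd_kernel_form
    (q z : ℝ) (hq : 0 < q) (hz : 0 < z) (f : ℝ → ℝ)
    (hmeas : Measurable f) (hpos : ∀ t ∈ Set.Ioi (0:ℝ), 0 ≤ f t)
    (hint : IntegrableOn (fun t => (min t t⁻¹) ^ q * f t) (Set.Ioi 0)) :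
    ∫ w : ℝ, q * Real.exp (-(2 * q * |w|)) *
        (∫ t in z..(z * Real.exp (-(2 * w))), f t) =
      ∫ t in Set.Ioi (0:ℝ), laplaceKernel q ((1 / 2) * Real.log (z / t)) * f t := by
  open FrischLloyd in
  calc _ = ∫ w, ∫ t, integrand q z f w t := by
        simp_rw [integral_integrand_eq_mul_intervalIntegral]; rfl
    _ = ∫ t, ∫ w, integrand q z f w t :=
      integral_integral_swap (integrable_integrand hq hz hmeas hpos hint)
    _ = ∫ t in Ioi 0, ∫ w, integrand q z f w t :=
      (setIntegral_eq_integral_of_forall_compl_eq_zero fun t ht => by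
        simp [integrand_of_nonpos hz (not_lt.1 ht)]).symm
    _ = _ := setIntegral_congr_ae measurableSet_Ioi <|
      (Measure.ae_ne volume z).mono fun t htz ht =>
        integral_integrand_eq_laplaceKernel_mul hq hz ht htz
end

section
/- Let p > 0, q > 0, and let ρ(w) := q·e^{−2q|w|}. Suppose f : (0, ∞) → ℝ is measurable with ∫_0^∞ min(t, 1/t)^q·|f(t)| dt < ∞ and satisfies, for every z > 0, the Frisch–Lloyd equation at energy E = −1 with vanishing integrated density of states: (z² − 1)·f(z) + p·∫_ℝ ρ(w)·(∫_z^{z·e^{−2w}} f(t) dt) dw = 0. Then the function g(z) := f(1/z)/z² satisfies the same equation: (z² − 1)·g(z) + p·∫_ℝ ρ(w)·(∫_z^{z·e^{−2w}} g(t) dt) dw = 0 for every z > 0. -/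
/-!
The substitution `t ↦ 1/t` turns `f(1/t) dt / t²` into `f(s) ds` and maps the interval from `z` to
`z e^{-2w}` onto the interval from `1/z` to `e^{2w}/z` with its orientation reversed. After the
reflection `w ↦ -w`, which leaves the Laplace density invariant, the integral term of `g` at `z` is
minus that of `f` at `1/z`; so is the potential term, since `(z² - 1) / z² = -((1/z)² - 1)`.
-/

open MeasureTheory Set

theorem image_inv_Ioo_of_pos {a b : ℝ} (ha : 0 < a) (hb : 0 < b) :
    Inv.inv '' Ioo a b = Ioo b⁻¹ a⁻¹ := by
  ext x
  rw [image_inv_eq_inv, mem_inv, mem_Ioo, mem_Ioo]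
  by_cases hx : 0 < x
  · rw [lt_inv_comm₀ ha hx, inv_lt_comm₀ hx hb, and_comm]
  · constructor
    · exact fun h => absurd (inv_pos.1 (ha.trans h.1)) hx
    · exact fun h => absurd ((inv_pos.2 hb).trans h.1) hx

section

variable {E : Type*} [NormedAddCommGroup E] [NormedSpace ℝ E]

theorem intervalIntegral.integral_comp_inv_of_le (f : ℝ → E) {a b : ℝ} (ha : 0 < a) (hab : a ≤ b) :
    ∫ t in a..b, (t ^ 2)⁻¹ • f t⁻¹ = ∫ s in b⁻¹..a⁻¹, f s := by
  have hinv_deriv : ∀ x ∈ Ioo a b, HasDerivWithinAt Inv.inv (-(x ^ 2)⁻¹) (Ioo a b) x :=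
    fun x hx => (hasDerivAt_inv (ha.trans hx.1).ne').hasDerivWithinAt
  rw [intervalIntegral.integral_of_le hab, intervalIntegral.integral_of_le (inv_anti₀ ha hab),
    integral_Ioc_eq_integral_Ioo, integral_Ioc_eq_integral_Ioo,
    ← image_inv_Ioo_of_pos ha (ha.trans_le hab),
    integral_image_eq_integral_abs_deriv_smul measurableSet_Ioo hinv_deriv inv_injective.injOn]
  refine setIntegral_congr_fun measurableSet_Ioo fun x hx => ?_
  rw [abs_neg, abs_of_pos (inv_pos.2 (pow_pos (ha.trans hx.1) 2))]

theorem intervalIntegral.integral_comp_inv (f : ℝ → E) {a b : ℝ} (ha : 0 < a) (hb : 0 < b) :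
    ∫ t in a..b, (t ^ 2)⁻¹ • f t⁻¹ = ∫ s in b⁻¹..a⁻¹, f s := by
  rcases le_total a b with hab | hba
  · exact integral_comp_inv_of_le f ha hab
  · rw [intervalIntegral.integral_symm, integral_comp_inv_of_le f hb hba,
      intervalIntegral.integral_symm, neg_neg]

end

theorem integral_comp_inv_div_sq_mul_exp (f : ℝ → ℝ) {z : ℝ} (hz : 0 < z) (w : ℝ) :
    ∫ t in z..z * Real.exp (-(2 * w)), f t⁻¹ / t ^ 2 =
      -∫ t in z⁻¹..z⁻¹ * Real.exp (2 * w), f t := by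
  have hsubst := intervalIntegral.integral_comp_inv f hz (mul_pos hz (Real.exp_pos (-(2 * w))))
  simp only [smul_eq_mul, inv_mul_eq_div] at hsubst
  rw [hsubst, mul_inv, ← Real.exp_neg, neg_neg, intervalIntegral.integral_symm]

theorem integral_laplace_mul_integral_comp_inv_div_sq (q : ℝ) (f : ℝ → ℝ) {z : ℝ} (hz : 0 < z) :
    ∫ w, q * Real.exp (-(2 * q * |w|)) * ∫ t in z..z * Real.exp (-(2 * w)), f t⁻¹ / t ^ 2 =
      -∫ w, q * Real.exp (-(2 * q * |w|)) * ∫ t in z⁻¹..z⁻¹ * Real.exp (-(2 * w)), f t := by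
  let F : ℝ → ℝ := fun w =>
    q * Real.exp (-(2 * q * |w|)) * ∫ t in z⁻¹..z⁻¹ * Real.exp (-(2 * w)), f t
  calc _ = ∫ w, -F (-w) := by
        simp only [F, integral_comp_inv_div_sq_mul_exp f hz, abs_neg, mul_neg, neg_neg]
    _ = -∫ w, F w := by rw [integral_neg, integral_neg_eq_self]

theorem frisch_lloyd_involution_general
    (p q : ℝ) (f : ℝ → ℝ)
    (heq : ∀ z : ℝ, 0 < z →
      (z ^ 2 - 1) * f z +
          p * ∫ w : ℝ, q * Real.exp (-(2 * q * |w|)) *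
            (∫ t in z..(z * Real.exp (-(2 * w))), f t) = 0)
    (g : ℝ → ℝ) (hg : ∀ z : ℝ, g z = f z⁻¹ / z ^ 2) :
    ∀ z : ℝ, 0 < z →
      (z ^ 2 - 1) * g z +
          p * ∫ w : ℝ, q * Real.exp (-(2 * q * |w|)) *
            (∫ t in z..(z * Real.exp (-(2 * w))), g t) = 0 := by
  intro z hz
  have hpotential : (z ^ 2 - 1) * (f z⁻¹ / z ^ 2) = -((z⁻¹ ^ 2 - 1) * f z⁻¹) := by
    field_simp
    ring
  simp only [hg, integral_laplace_mul_integral_comp_inv_div_sq q f hz, hpotential]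
  linarith [heq z⁻¹ (inv_pos.2 hz)]

/-- **Involution symmetry of the Frisch–Lloyd equation at energy `E = -1`.**
If `f` solves `(z²-1) f(z) + p ∫ ρ(w) (∫_z^{z e^{-2w}} f) dw = 0` for all `z > 0`,
with `ρ(w) = q e^{-2q|w|}`, then `g(z) := f(1/z)/z²` solves the same equation. -/
theorem frisch_lloyd_involution
    (p q : ℝ) (hp : 0 < p) (hq : 0 < q) (f : ℝ → ℝ)
    (hmeas : Measurable f)
    (hint : IntegrableOn (fun t => (min t t⁻¹) ^ q * |f t|) (Set.Ioi 0))
    (heq : ∀ z : ℝ, 0 < z →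
      (z ^ 2 - 1) * f z +
          p * ∫ w : ℝ, q * Real.exp (-(2 * q * |w|)) *
            (∫ t in z..(z * Real.exp (-(2 * w))), f t) = 0)
    (g : ℝ → ℝ) (hg : ∀ z : ℝ, g z = f z⁻¹ / z ^ 2) :
    ∀ z : ℝ, 0 < z →
      (z ^ 2 - 1) * g z +
          p * ∫ w : ℝ, q * Real.exp (-(2 * q * |w|)) *
            (∫ t in z..(z * Real.exp (-(2 * w))), g t) = 0 :=
  frisch_lloyd_involution_general p q f heq g hg
end

section
/- Let p > 0, q > 0, and let K(y) := −sign(y)·(1/2)·e^{−2q|y|}. Suppose f : (0, ∞) → ℝ is continuous, satisfies ∫_0^∞ min(t, 1/t)^q·|f(t)| dt < ∞, and satisfies for every z > 0 the integral equation (z² − 1)·f(z) + p·∫_0^∞ K((1/2)·ln(z/t))·f(t) dt = 0. Then the function φ(z) := (z² − 1)·f(z) is twice differentiable on (0, 1) ∪ (1, ∞) and satisfies there the second-order linear differential equation z·(d/dz)[ z·( φ'(z) − p·φ(z)/(z² − 1) ) ] − q²·φ(z) = 0. -/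
open MeasureTheory

/-!
Splitting the integral at `t = z`, the kernel becomes `-(t/z)^q / 2` for `t < z` and
`(z/t)^q / 2` for `t > z`, so `φ = (p/2)(L - U)` with `L(z) = z^{-q} ∫_0^z t^q f` and
`U(z) = z^q ∫_z^∞ t^{-q} f`. The Euler operator `D = z d/dz` acts by `DL = -qL + zf` and
`DU = qU - zf`; hence `χ = Dφ - pzf = -(pq/2)(L + U)` and `Dχ = (pq²/2)(L - U) = q²φ`.
-/

open Set

section IntegralsOverHalfLines

variable {E : Type*} [NormedAddCommGroup E] {g : ℝ → E} {a b z : ℝ}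

theorem integrableOn_Ioc_of_continuousOn_Ioi (hg : ContinuousOn g (Ioi a))
    (hb : IntegrableOn g (Ioc a b)) (hab : a < b) (z : ℝ) : IntegrableOn g (Ioc a z) := by
  have hbz : IntegrableOn g (Icc b z) :=
    (hg.mono fun t ht => hab.trans_le ht.1).integrableOn_Icc
  refine (hb.union hbz).mono_set fun t ht => ?_
  rcases le_total t b with htb | htb
  exacts [Or.inl ⟨ht.1, htb⟩, Or.inr ⟨htb, ht.2⟩]

theorem integrableOn_Ioi_of_continuousOn_Ioi (hg : ContinuousOn g (Ioi a))
    (hb : IntegrableOn g (Ioi b)) (hz : a < z) : IntegrableOn g (Ioi z) := by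
  have hzb : IntegrableOn g (Icc z b) :=
    (hg.mono fun t ht => hz.trans_le ht.1).integrableOn_Icc
  refine (hzb.union hb).mono_set fun t ht => ?_
  rcases le_or_gt t b with htb | htb
  exacts [Or.inl ⟨le_of_lt ht, htb⟩, Or.inr htb]

variable [NormedSpace ℝ E] [CompleteSpace E]

theorem hasDerivAt_integral_Ioc (hg : ContinuousOn g (Ioi a)) (hint : IntegrableOn g (Ioc a z))
    (hz : a < z) : HasDerivAt (fun w => ∫ t in Ioc a w, g t) (g z) z := by
  have hFTC := intervalIntegral.integral_hasDerivAt_right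
    ((intervalIntegrable_iff_integrableOn_Ioc_of_le hz.le).2 hint)
    (hg.stronglyMeasurableAtFilter isOpen_Ioi z hz) (hg.continuousAt (Ioi_mem_nhds hz))
  refine hFTC.congr_of_eventuallyEq ?_
  filter_upwards [Ioi_mem_nhds hz] with w hw
  exact (intervalIntegral.integral_of_le (le_of_lt hw)).symm

theorem hasDerivAt_integral_Ioi (hg : ContinuousOn g (Ioi a)) (hint : IntegrableOn g (Ioi z))
    (hz : a < z) : HasDerivAt (fun w => ∫ t in Ioi w, g t) (-g z) z := by
  have hFTC := (intervalIntegral.integral_hasDerivAt_left IntervalIntegrable.refl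
    (hg.stronglyMeasurableAtFilter isOpen_Ioi z hz)
    (hg.continuousAt (Ioi_mem_nhds hz))).add_const (∫ t in Ioi z, g t)
  refine hFTC.congr_of_eventuallyEq ?_
  filter_upwards [Ioi_mem_nhds hz] with w hw
  refine (intervalIntegral.integral_interval_add_Ioi' (hg.mono ?_).intervalIntegrable hint).symm
  exact fun t ht => lt_of_lt_of_le (lt_min hw hz) ht.1

end IntegralsOverHalfLines

theorem laplaceKernel_half_log_of_one_lt (q : ℝ) {x : ℝ} (hx : 1 < x) :
    laplaceKernel q (1 / 2 * Real.log x) = -(1 / 2) * x ^ (-q) := by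
  have hy : 0 < 1 / 2 * Real.log x := by have := Real.log_pos hx; positivity
  rw [laplaceKernel, Real.sign_of_pos hy, abs_of_pos hy, Real.rpow_def_of_pos (by linarith)]
  ring_nf

theorem laplaceKernel_half_log_of_lt_one (q : ℝ) {x : ℝ} (hx0 : 0 < x) (hx : x < 1) :
    laplaceKernel q (1 / 2 * Real.log x) = 1 / 2 * x ^ q := by
  have hy : 1 / 2 * Real.log x < 0 := by have := Real.log_neg hx0 hx; linarith
  rw [laplaceKernel, Real.sign_of_neg hy, abs_of_neg hy, Real.rpow_def_of_pos hx0]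
  ring_nf

noncomputable def lowerPart (q : ℝ) (f : ℝ → ℝ) (z : ℝ) : ℝ :=
  z ^ (-q) * ∫ t in Ioc 0 z, t ^ q * f t

noncomputable def upperPart (q : ℝ) (f : ℝ → ℝ) (z : ℝ) : ℝ :=
  z ^ q * ∫ t in Ioi z, t ^ (-q) * f t

section FrischLloyd

variable {q z : ℝ} {f : ℝ → ℝ}

theorem continuousOn_rpow_mul (hf : ContinuousOn f (Ioi 0)) (r : ℝ) :
    ContinuousOn (fun t => t ^ r * f t) (Ioi 0) :=
  (continuousOn_id.rpow_const fun _ ht => Or.inl (ne_of_gt ht)).mul hf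

theorem integrableOn_rpow_mul_Ioc_zero (hf : ContinuousOn f (Ioi 0))
    (hint : IntegrableOn (fun t => min t t⁻¹ ^ q * |f t|) (Ioi 0)) (z : ℝ) :
    IntegrableOn (fun t => t ^ q * f t) (Ioc 0 z) := by
  have hone : IntegrableOn (fun t => t ^ q * f t) (Ioc 0 1) := by
    refine Integrable.mono' (hint.mono_set Ioc_subset_Ioi_self)
      (((continuousOn_rpow_mul hf q).mono Ioc_subset_Ioi_self).aestronglyMeasurable
        measurableSet_Ioc) ?_
    filter_upwards [ae_restrict_mem measurableSet_Ioc] with t ⟨ht0, ht1⟩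
    rw [min_eq_left (ht1.trans ((one_le_inv₀ ht0).2 ht1)), norm_mul, Real.norm_eq_abs,
      Real.norm_eq_abs, abs_of_nonneg (Real.rpow_nonneg ht0.le q)]
  exact integrableOn_Ioc_of_continuousOn_Ioi (continuousOn_rpow_mul hf q) hone one_pos z

theorem integrableOn_rpow_neg_mul_Ioi (hf : ContinuousOn f (Ioi 0))
    (hint : IntegrableOn (fun t => min t t⁻¹ ^ q * |f t|) (Ioi 0)) (hz : 0 < z) :
    IntegrableOn (fun t => t ^ (-q) * f t) (Ioi z) := by
  have hone : IntegrableOn (fun t => t ^ (-q) * f t) (Ioi 1) := by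
    refine Integrable.mono' (hint.mono_set (Ioi_subset_Ioi zero_le_one))
      (((continuousOn_rpow_mul hf (-q)).mono (Ioi_subset_Ioi zero_le_one)).aestronglyMeasurable
        measurableSet_Ioi) ?_
    filter_upwards [ae_restrict_mem measurableSet_Ioi] with t (ht : 1 < t)
    have ht0 : 0 < t := one_pos.trans ht
    rw [min_eq_right ((inv_le_one_of_one_le₀ ht.le).trans ht.le), norm_mul, Real.norm_eq_abs,
      Real.norm_eq_abs, Real.inv_rpow ht0.le, ← Real.rpow_neg ht0.le,
      abs_of_nonneg (Real.rpow_nonneg ht0.le _)]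
  exact integrableOn_Ioi_of_continuousOn_Ioi (continuousOn_rpow_mul hf (-q)) hone hz

theorem integral_laplaceKernel_half_log_mul
    (hlow : IntegrableOn (fun t => t ^ q * f t) (Ioc 0 z))
    (hup : IntegrableOn (fun t => t ^ (-q) * f t) (Ioi z)) (hz : 0 < z) :
    ∫ t in Ioi 0, laplaceKernel q (1 / 2 * Real.log (z / t)) * f t =
      (upperPart q f z - lowerPart q f z) / 2 := by
  have hEqLow : EqOn (fun t => laplaceKernel q (1 / 2 * Real.log (z / t)) * f t)
      (fun t => -(1 / 2 * z ^ (-q)) * (t ^ q * f t)) (Ioo 0 z) := fun t ht => by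
    dsimp only
    rw [laplaceKernel_half_log_of_one_lt q ((one_lt_div ht.1).2 ht.2),
      Real.div_rpow hz.le ht.1.le, Real.rpow_neg ht.1.le, div_inv_eq_mul]
    ring
  have hEqUp : EqOn (fun t => laplaceKernel q (1 / 2 * Real.log (z / t)) * f t)
      (fun t => 1 / 2 * z ^ q * (t ^ (-q) * f t)) (Ioi z) := fun t (ht : z < t) => by
    have ht0 : 0 < t := hz.trans ht
    dsimp only
    rw [laplaceKernel_half_log_of_lt_one q (div_pos hz ht0) ((div_lt_one ht0).2 ht),
      Real.div_rpow hz.le ht0.le, Real.rpow_neg ht0.le]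
    ring
  have hIntLow : IntegrableOn
      (fun t => laplaceKernel q (1 / 2 * Real.log (z / t)) * f t) (Ioc 0 z) := by
    rw [integrableOn_Ioc_iff_integrableOn_Ioo]
    exact IntegrableOn.congr_fun ((hlow.mono_set Ioo_subset_Ioc_self).const_mul _) hEqLow.symm
      measurableSet_Ioo
  have hIntUp : IntegrableOn
      (fun t => laplaceKernel q (1 / 2 * Real.log (z / t)) * f t) (Ioi z) :=
    IntegrableOn.congr_fun (hup.const_mul _) hEqUp.symm measurableSet_Ioi
  rw [← Ioc_union_Ioi_eq_Ioi hz.le, setIntegral_union Ioc_disjoint_Ioi_same measurableSet_Ioi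
      hIntLow hIntUp, integral_Ioc_eq_integral_Ioo, setIntegral_congr_fun measurableSet_Ioo hEqLow,
    setIntegral_congr_fun measurableSet_Ioi hEqUp, integral_const_mul, integral_const_mul,
    ← integral_Ioc_eq_integral_Ioo, lowerPart, upperPart]
  ring

theorem hasDerivAt_lowerPart (hf : ContinuousOn f (Ioi 0))
    (hint : IntegrableOn (fun t => t ^ q * f t) (Ioc 0 z)) (hz : 0 < z) :
    HasDerivAt (lowerPart q f) (-q * lowerPart q f z / z + f z) z := by
  have hpow : HasDerivAt (fun w : ℝ => w ^ (-q)) (-q * z ^ (-q - 1)) z :=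
    Real.hasDerivAt_rpow_const (Or.inl hz.ne')
  refine (hpow.mul (hasDerivAt_integral_Ioc (continuousOn_rpow_mul hf q) hint hz)).congr_deriv ?_
  rw [lowerPart, Real.rpow_sub_one hz.ne', Real.rpow_neg hz.le]
  field_simp

theorem hasDerivAt_upperPart (hf : ContinuousOn f (Ioi 0))
    (hint : IntegrableOn (fun t => t ^ (-q) * f t) (Ioi z)) (hz : 0 < z) :
    HasDerivAt (upperPart q f) (q * upperPart q f z / z - f z) z := by
  have hpow : HasDerivAt (fun w : ℝ => w ^ q) (q * z ^ (q - 1)) z :=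
    Real.hasDerivAt_rpow_const (Or.inl hz.ne')
  refine (hpow.mul (hasDerivAt_integral_Ioi (continuousOn_rpow_mul hf (-q)) hint hz)).congr_deriv ?_
  rw [upperPart, Real.rpow_sub_one hz.ne', Real.rpow_neg hz.le]
  field_simp
  ring

end FrischLloyd

theorem pos_and_sq_sub_one_ne_zero_of_mem {z : ℝ} (hz : z ∈ Ioo 0 1 ∪ Ioi 1) :
    0 < z ∧ z ^ 2 - 1 ≠ 0 := by
  rcases hz with ⟨hz0, hz1⟩ | (hz1 : 1 < z)
  · exact ⟨hz0, by nlinarith⟩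
  · exact ⟨one_pos.trans hz1, by nlinarith⟩

theorem frisch_lloyd_to_ode_general
    (p q : ℝ) (f : ℝ → ℝ)
    (hcont : ContinuousOn f (Set.Ioi 0))
    (hint : IntegrableOn (fun t => (min t t⁻¹) ^ q * |f t|) (Set.Ioi 0))
    (heq : ∀ z : ℝ, 0 < z →
      (z ^ 2 - 1) * f z +
          p * ∫ t in Set.Ioi (0:ℝ),
            laplaceKernel q ((1 / 2) * Real.log (z / t)) * f t = 0)
    (φ χ : ℝ → ℝ)
    (hφ : φ = fun z => (z ^ 2 - 1) * f z)
    (hχ : χ = fun z => z * (deriv φ z - p * φ z / (z ^ 2 - 1))) :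
    ∀ z ∈ Set.Ioo (0:ℝ) 1 ∪ Set.Ioi 1,
      DifferentiableAt ℝ φ z ∧ DifferentiableAt ℝ χ z ∧
        z * deriv χ z - q ^ 2 * φ z = 0 := by
  set L := lowerPart q f
  set U := upperPart q f
  have hlow := integrableOn_rpow_mul_Ioc_zero hcont hint
  have hup := fun z (hz : 0 < z) => integrableOn_rpow_neg_mul_Ioi hcont hint hz
  have hφ_eq : ∀ z ∈ Ioi 0, φ z = p / 2 * (L z - U z) := fun z (hz : 0 < z) => by
    have h := heq z hz
    rw [integral_laplaceKernel_half_log_mul (hlow z) (hup z hz) hz] at h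
    rw [hφ]
    linarith
  have hφ_deriv : ∀ z, 0 < z →
      HasDerivAt φ (p / 2 * ((-q * L z / z + f z) - (q * U z / z - f z))) z := fun z hz =>
    (((hasDerivAt_lowerPart hcont (hlow z) hz).sub
      (hasDerivAt_upperPart hcont (hup z hz) hz)).const_mul (p / 2)).congr_of_eventuallyEq
      (Filter.eventually_of_mem (Ioi_mem_nhds hz) hφ_eq)
  have hχ_eq : ∀ z ∈ Ioo 0 1 ∪ Ioi 1, χ z = -(p * q / 2) * (L z + U z) := fun z hz => by
    obtain ⟨hz0, hz1⟩ := pos_and_sq_sub_one_ne_zero_of_mem hz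
    rw [hχ]
    dsimp only
    rw [(hφ_deriv z hz0).deriv, hφ]
    field_simp
    ring
  have hχ_deriv : ∀ z ∈ Ioo 0 1 ∪ Ioi 1,
      HasDerivAt χ (-(p * q / 2) * ((-q * L z / z + f z) + (q * U z / z - f z))) z := by
    intro z hz
    have hz0 := (pos_and_sq_sub_one_ne_zero_of_mem hz).1
    exact (((hasDerivAt_lowerPart hcont (hlow z) hz0).add
      (hasDerivAt_upperPart hcont (hup z hz0) hz0)).const_mul _).congr_of_eventuallyEq
      (Filter.eventually_of_mem ((isOpen_Ioo.union isOpen_Ioi).mem_nhds hz) hχ_eq)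
  intro z hz
  obtain ⟨hz0, -⟩ := pos_and_sq_sub_one_ne_zero_of_mem hz
  refine ⟨(hφ_deriv z hz0).differentiableAt, (hχ_deriv z hz).differentiableAt, ?_⟩
  rw [(hχ_deriv z hz).deriv, hφ_eq z hz0]
  field_simp
  ring

/-- **Reduction of the Frisch–Lloyd equation to a differential equation.**
If the continuous `f` solves `(z²-1) f(z) + p ∫_0^∞ K(½ ln(z/t)) f(t) dt = 0`
on `(0,∞)`, then `φ(z) := (z²-1) f(z)` is twice differentiable on
`(0,1) ∪ (1,∞)` and satisfies
`z (d/dz)[ z (φ' - p φ/(z²-1)) ] - q² φ = 0` there. -/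
theorem frisch_lloyd_to_ode
    (p q : ℝ) (hp : 0 < p) (hq : 0 < q) (f : ℝ → ℝ)
    (hcont : ContinuousOn f (Set.Ioi 0))
    (hint : IntegrableOn (fun t => (min t t⁻¹) ^ q * |f t|) (Set.Ioi 0))
    (heq : ∀ z : ℝ, 0 < z →
      (z ^ 2 - 1) * f z +
          p * ∫ t in Set.Ioi (0:ℝ),
            laplaceKernel q ((1 / 2) * Real.log (z / t)) * f t = 0)
    (φ χ : ℝ → ℝ)
    (hφ : φ = fun z => (z ^ 2 - 1) * f z)
    (hχ : χ = fun z => z * (deriv φ z - p * φ z / (z ^ 2 - 1))) :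
    ∀ z ∈ Set.Ioo (0:ℝ) 1 ∪ Set.Ioi 1,
      DifferentiableAt ℝ φ z ∧ DifferentiableAt ℝ χ z ∧
        z * deriv χ z - q ^ 2 * φ z = 0 :=
  frisch_lloyd_to_ode_general p q f hcont hint heq φ χ hφ hχ
end

section
/- Let p > 0 with p ≠ 2, let A be any real constant, and define, for z > 0, f(z) := (A/(p − 2)) · (1/z) · [ 1 − (1 + p·z + z²) / ( |z − 1|^{1 − p/2} · (z + 1)^{1 + p/2} ) ]. Then the function φ(z) := (z² − 1)·f(z) is twice differentiable on (0, 1) ∪ (1, ∞) and satisfies there the second-order linear differential equation z·(d/dz)[ z·( φ'(z) − p·φ(z)/(z² − 1) ) ] − q²·φ(z) = 0 with q = 1. -/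
/-!
Writing `χ = z (φ' - p φ / (z² - 1))`, the equation is the first-order system
`φ' = χ / z + p φ / (z² - 1)`, `χ' = φ / z`.
The weight `T = (z² - 1) / (|z - 1|^{1 - p/2} (z + 1)^{1 + p/2})` has logarithmic derivative
`p / (z² - 1)`, so it absorbs the term `p φ / (z² - 1)`, and with `c = A / (p - 2)` the pair
`φ = c (z - 1/z - (z + p + 1/z) T)`, `χ = c (z + 1/z - p - (z - 1/z) T)`
solves the system by direct differentiation.
-/

open Real Filter Topology

lemma abs_rpow_eq_exp_mul_log {x : ℝ} (hx : x ≠ 0) (a : ℝ) : |x| ^ a = exp (a * log x) := by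
  rw [rpow_def_of_pos (abs_pos.mpr hx), log_abs, mul_comm]

lemma hasDerivAt_abs_sub_one_rpow_mul_add_one_rpow (a b : ℝ) {z : ℝ} (hz1 : z ≠ 1)
    (hz : -1 < z) :
    HasDerivAt (fun x => |x - 1| ^ a * (x + 1) ^ b)
      (|z - 1| ^ a * (z + 1) ^ b * (a / (z - 1) + b / (z + 1))) z := by
  have hexp : ∀ x, x ≠ 1 → -1 < x →
      |x - 1| ^ a * (x + 1) ^ b = exp (a * log (x - 1) + b * log (x + 1)) := by
    intro x hx1 hx
    rw [exp_add, ← abs_rpow_eq_exp_mul_log (sub_ne_zero.mpr hx1),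
      ← abs_rpow_eq_exp_mul_log (by linarith), abs_of_pos (by linarith : 0 < x + 1)]
  have hlog : HasDerivAt (fun x => a * log (x - 1) + b * log (x + 1))
      (a * (1 / (z - 1)) + b * (1 / (z + 1))) z :=
    ((((hasDerivAt_id' z).sub_const 1).log (sub_ne_zero.mpr hz1)).const_mul a).add
      ((((hasDerivAt_id' z).add_const 1).log (by simp; linarith)).const_mul b)
  rw [hexp z hz1 hz]
  refine (hlog.exp.congr_deriv (by ring)).congr_of_eventuallyEq ?_
  filter_upwards [isOpen_ne.mem_nhds hz1, Ioi_mem_nhds hz] with x hx1 hx using hexp x hx1 hx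

noncomputable def zeroMode (p z : ℝ) : ℝ :=
  (z ^ 2 - 1) / (|z - 1| ^ (1 - p / 2) * (z + 1) ^ (1 + p / 2))

lemma hasDerivAt_zeroMode (p : ℝ) {z : ℝ} (hz1 : z ≠ 1) (hz : -1 < z) :
    HasDerivAt (zeroMode p) (p * zeroMode p z / (z ^ 2 - 1)) z := by
  have hD : 0 < |z - 1| ^ (1 - p / 2) * (z + 1) ^ (1 + p / 2) :=
    mul_pos (rpow_pos_of_pos (abs_pos.mpr (sub_ne_zero.mpr hz1)) _)
      (rpow_pos_of_pos (by linarith) _)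
  have hz1' : z - 1 ≠ 0 := sub_ne_zero.mpr hz1
  have hz2 : z + 1 ≠ 0 := by linarith
  have hsq : z ^ 2 - 1 ≠ 0 := sub_ne_zero.mpr (sq_ne_one_iff.mpr ⟨hz1, hz.ne'⟩)
  refine (((hasDerivAt_pow 2 z).sub_const 1).div
    (hasDerivAt_abs_sub_one_rpow_mul_add_one_rpow _ _ hz1 hz) hD.ne').congr_deriv ?_
  unfold zeroMode
  field_simp
  ring

section qOne

variable (p c : ℝ)

noncomputable def qOneSolution (z : ℝ) : ℝ :=
  c * (z - z⁻¹ - (z + p + z⁻¹) * zeroMode p z)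

noncomputable def qOneFlux (z : ℝ) : ℝ :=
  c * (z + z⁻¹ - p - (z - z⁻¹) * zeroMode p z)

variable {p c} {z : ℝ}

lemma hasDerivAt_qOneSolution (hz : 0 < z) (hz1 : z ≠ 1) :
    HasDerivAt (qOneSolution p c)
      (qOneFlux p c z / z + p * qOneSolution p c z / (z ^ 2 - 1)) z := by
  have hsq : z ^ 2 - 1 ≠ 0 := sub_ne_zero.mpr (sq_ne_one_iff.mpr ⟨hz1, by linarith⟩)
  have hinv := hasDerivAt_inv hz.ne'
  refine ((((hasDerivAt_id' z).sub hinv).sub ((((hasDerivAt_id' z).add_const p).add hinv).mul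
    (hasDerivAt_zeroMode p hz1 (by linarith)))).const_mul c).congr_deriv ?_
  simp only [Pi.add_apply]
  unfold qOneFlux qOneSolution
  field_simp
  ring

lemma hasDerivAt_qOneFlux (hz : 0 < z) (hz1 : z ≠ 1) :
    HasDerivAt (qOneFlux p c) (qOneSolution p c z / z) z := by
  have hsq : z ^ 2 - 1 ≠ 0 := sub_ne_zero.mpr (sq_ne_one_iff.mpr ⟨hz1, by linarith⟩)
  have hinv := hasDerivAt_inv hz.ne'
  refine (((((hasDerivAt_id' z).add hinv).sub_const p).sub (((hasDerivAt_id' z).sub hinv).mul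
    (hasDerivAt_zeroMode p hz1 (by linarith)))).const_mul c).congr_deriv ?_
  simp only [Pi.sub_apply]
  unfold qOneSolution
  field_simp
  ring

end qOne

lemma sq_sub_one_mul_density_eq_qOneSolution (p A : ℝ) {z : ℝ} (hz : z ≠ 0) :
    (z ^ 2 - 1) * (A / (p - 2) * (1 / z) *
      (1 - (1 + p * z + z ^ 2) / (|z - 1| ^ (1 - p / 2) * (z + 1) ^ (1 + p / 2)))) =
      qOneSolution p (A / (p - 2)) z := by
  unfold qOneSolution zeroMode
  field_simp
  ring

theorem explicit_density_solves_ode_q_one_general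
    (p A : ℝ) (f : ℝ → ℝ)
    (hf : ∀ z : ℝ, 0 < z → f z =
      A / (p - 2) * (1 / z) *
        (1 - (1 + p * z + z ^ 2) /
          (|z - 1| ^ (1 - p / 2) * (z + 1) ^ (1 + p / 2))))
    (φ χ : ℝ → ℝ)
    (hφ : φ = fun z => (z ^ 2 - 1) * f z)
    (hχ : χ = fun z => z * (deriv φ z - p * φ z / (z ^ 2 - 1))) :
    ∀ z ∈ Set.Ioo (0:ℝ) 1 ∪ Set.Ioi 1,
      DifferentiableAt ℝ φ z ∧ DifferentiableAt ℝ χ z ∧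
        z * deriv χ z - 1 ^ 2 * φ z = 0 := by
  have hφ_eq : ∀ x, 0 < x → φ x = qOneSolution p (A / (p - 2)) x := fun x hx => by
    simp only [hφ]
    rw [hf x hx, sq_sub_one_mul_density_eq_qOneSolution p A hx.ne']
  have hφ' : ∀ x, 0 < x → x ≠ 1 → HasDerivAt φ _ x := fun x hx hx1 =>
    (hasDerivAt_qOneSolution hx hx1).congr_of_eventuallyEq
      (eventually_of_mem (Ioi_mem_nhds hx) hφ_eq)
  intro z hz
  obtain ⟨hz0, hz1⟩ : 0 < z ∧ z ≠ 1 := by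
    rcases hz with ⟨hz0, hz1⟩ | (hz1 : 1 < z)
    · exact ⟨hz0, hz1.ne⟩
    · exact ⟨by linarith, hz1.ne'⟩
  have hχ_eq : χ =ᶠ[𝓝 z] qOneFlux p (A / (p - 2)) := by
    filter_upwards [Ioi_mem_nhds hz0, isOpen_ne.mem_nhds hz1] with x (hx0 : 0 < x) hx1
    have hsq : x ^ 2 - 1 ≠ 0 := sub_ne_zero.mpr (sq_ne_one_iff.mpr ⟨hx1, by linarith⟩)
    simp only [hχ]
    rw [(hφ' x hx0 hx1).deriv, hφ_eq x hx0]
    field_simp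
    ring
  have hχ' := (hasDerivAt_qOneFlux hz0 hz1).congr_of_eventuallyEq hχ_eq
  refine ⟨(hφ' z hz0 hz1).differentiableAt, hχ'.differentiableAt, ?_⟩
  rw [hχ'.deriv, hφ_eq z hz0]
  field_simp
  ring

/-- **The explicit `q = 1` stationary density solves the differential equation.**
For `p > 0`, `p ≠ 2` and any constant `A`, the function
`f(z) = (A/(p-2)) (1/z) [1 - (1+pz+z²)/(|z-1|^{1-p/2} (z+1)^{1+p/2})]`
yields `φ(z) := (z²-1) f(z)` which is twice differentiable on `(0,1) ∪ (1,∞)`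
and satisfies `z (d/dz)[ z (φ' - p φ/(z²-1)) ] - 1² φ = 0` there (the case `q = 1`). -/
theorem explicit_density_solves_ode_q_one
    (p A : ℝ) (hp : 0 < p) (hp2 : p ≠ 2) (f : ℝ → ℝ)
    (hf : ∀ z : ℝ, 0 < z → f z =
      A / (p - 2) * (1 / z) *
        (1 - (1 + p * z + z ^ 2) /
          (|z - 1| ^ (1 - p / 2) * (z + 1) ^ (1 + p / 2))))
    (φ χ : ℝ → ℝ)
    (hφ : φ = fun z => (z ^ 2 - 1) * f z)
    (hχ : χ = fun z => z * (deriv φ z - p * φ z / (z ^ 2 - 1))) :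
    ∀ z ∈ Set.Ioo (0:ℝ) 1 ∪ Set.Ioi 1,
      DifferentiableAt ℝ φ z ∧ DifferentiableAt ℝ χ z ∧
        z * deriv χ z - 1 ^ 2 * φ z = 0 :=
  explicit_density_solves_ode_q_one_general p A f hf φ χ hφ hχ
end

section
/- ∫_0^∞ [ (1/(2z)) · ln( (z + 1)/|z − 1| ) − 1/(z + 1)² ] dz = π²/4 − 1. -/
/-!
On `(0, 1)` the logarithmic part `L = halfLogRatio` of the integrand,
`L z = log ((1 + z) / (1 - z)) / (2 z)`, is the series `∑ z ^ (2k) / (2k + 1)`; integrating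
termwise gives `∑ 1 / (2k + 1)² = π² / 8`. The substitution `z ↦ 1 / z` maps `L` on `(1, ∞)` to
`L` on `(0, 1)`, since `L (1 / u) / u² = L u`, so `∫₀^∞ L = π² / 4`, while `∫₀^∞ (z + 1)⁻² = 1`.
-/

open MeasureTheory Real Set Filter Topology

theorem hasSum_one_div_two_mul_add_one_sq :
    HasSum (fun k : ℕ => 1 / (2 * (k : ℝ) + 1) ^ 2) (π ^ 2 / 8) := by
  set f : ℕ → ℝ := fun n => 1 / (n : ℝ) ^ 2
  have h_even : HasSum (fun k => f (2 * k)) (π ^ 2 / 24) := by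
    rw [show π ^ 2 / 24 = 1 / 4 * (π ^ 2 / 6) by ring]
    refine (hasSum_zeta_two.mul_left (1 / 4)).congr_fun fun k => ?_
    simp only [f]
    push_cast
    ring
  have h_odd : HasSum (fun k => f (2 * k + 1)) (∑' k, f (2 * k + 1)) :=
    (hasSum_zeta_two.summable.comp_injective fun a b h => by simp at h; omega).hasSum
  have h_total := (h_even.even_add_odd h_odd).unique hasSum_zeta_two
  convert h_odd using 1
  · ext k; simp [f]
  · linarith

theorem Integrable.of_hasSum_of_summable_integral_norm {α E ι : Type*} [MeasurableSpace α]
    {μ : Measure α} [NormedAddCommGroup E] [Countable ι] {F : ι → α → E} {f : α → E}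
    (hf : AEStronglyMeasurable f μ) (hF_int : ∀ i, Integrable (F i) μ)
    (hF_sum : Summable fun i => ∫ a, ‖F i a‖ ∂μ) (h_sum : ∀ᵐ a ∂μ, HasSum (F · a) (f a)) :
    Integrable f μ := by
  refine ⟨hf, ?_⟩
  have h_le : ∀ᵐ a ∂μ, ‖f a‖ₑ ≤ ∑' i, ‖F i a‖ₑ := by
    filter_upwards [h_sum] with a ha
    rw [← ha.tsum_eq]
    exact enorm_tsum_le_tsum_enorm
  have h_lint : ∀ i, ∫⁻ a, ‖F i a‖ₑ ∂μ = ENNReal.ofReal (∫ a, ‖F i a‖ ∂μ) := fun i =>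
    (ofReal_integral_norm_eq_lintegral_enorm (hF_int i)).symm
  calc ∫⁻ a, ‖f a‖ₑ ∂μ ≤ ∫⁻ a, ∑' i, ‖F i a‖ₑ ∂μ := lintegral_mono_ae h_le
    _ = ∑' i, ENNReal.ofReal (∫ a, ‖F i a‖ ∂μ) := by
      rw [lintegral_tsum fun i => (hF_int i).1.enorm]; simp only [h_lint]
    _ < ⊤ := by
      rw [← ENNReal.ofReal_tsum_of_nonneg (fun i => integral_nonneg fun a => norm_nonneg _) hF_sum]
      exact ENNReal.ofReal_lt_top

section InvSubstitution

variable {E : Type*} [NormedAddCommGroup E] [NormedSpace ℝ E]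

theorem image_inv_Ioo_zero_one : (fun u : ℝ => u⁻¹) '' Ioo 0 1 = Ioi 1 := by
  rw [image_inv_eq_inv, inv_Ioo_0_left zero_lt_one, inv_one]

theorem integral_Ioi_one_eq_integral_Ioo_inv (f : ℝ → E) :
    ∫ z in Ioi 1, f z = ∫ u in Ioo 0 1, (u ^ 2)⁻¹ • f u⁻¹ := by
  rw [← image_inv_Ioo_zero_one, integral_image_eq_integral_abs_deriv_smul measurableSet_Ioo
    (fun u hu => (hasDerivAt_inv hu.1.ne').hasDerivWithinAt) inv_injective.injOn]
  simp only [abs_neg, abs_inv, abs_pow, sq_abs]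

theorem integrableOn_Ioi_one_iff_integrableOn_Ioo_inv (f : ℝ → E) :
    IntegrableOn f (Ioi 1) ↔ IntegrableOn (fun u => (u ^ 2)⁻¹ • f u⁻¹) (Ioo 0 1) := by
  rw [← image_inv_Ioo_zero_one, integrableOn_image_iff_integrableOn_abs_deriv_smul
    measurableSet_Ioo (fun u hu => (hasDerivAt_inv hu.1.ne').hasDerivWithinAt) inv_injective.injOn]
  simp only [abs_neg, abs_inv, abs_pow, sq_abs]

end InvSubstitution

theorem hasDerivAt_neg_inv_add_one {x : ℝ} (hx : 0 ≤ x) :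
    HasDerivAt (fun z : ℝ => -(z + 1)⁻¹) (1 / (x + 1) ^ 2) x := by
  refine (((hasDerivAt_id' x).add_const 1).inv (by positivity)).neg.congr_deriv ?_
  rw [neg_div, neg_neg]

theorem tendsto_neg_inv_add_one_atTop : Tendsto (fun z : ℝ => -(z + 1)⁻¹) atTop (𝓝 0) := by
  simpa using (tendsto_inv_atTop_zero.comp (tendsto_atTop_add_const_right atTop (1 : ℝ)
    tendsto_id)).neg

theorem integrableOn_one_div_add_one_sq_Ioi_zero :
    IntegrableOn (fun z : ℝ => 1 / (z + 1) ^ 2) (Ioi 0) :=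
  integrableOn_Ioi_deriv_of_nonneg' (fun _ hx => hasDerivAt_neg_inv_add_one hx)
    (fun _ _ => by positivity) tendsto_neg_inv_add_one_atTop

theorem integral_one_div_add_one_sq_Ioi_zero : ∫ z in Ioi (0 : ℝ), 1 / (z + 1) ^ 2 = 1 := by
  rw [integral_Ioi_of_hasDerivAt_of_nonneg' (fun _ hx => hasDerivAt_neg_inv_add_one hx)
    (fun _ _ => by positivity) tendsto_neg_inv_add_one_atTop]
  norm_num

noncomputable def halfLogRatio (z : ℝ) : ℝ := 1 / (2 * z) * log ((z + 1) / |z - 1|)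

theorem measurable_halfLogRatio : Measurable halfLogRatio := by
  unfold halfLogRatio
  fun_prop

theorem halfLogRatio_eq_of_mem_Ioo {z : ℝ} (hz : z ∈ Ioo (0 : ℝ) 1) :
    halfLogRatio z = (log (1 + z) - log (1 - z)) / (2 * z) := by
  rw [halfLogRatio, abs_of_neg (by linarith [hz.2]), neg_sub,
    log_div (by linarith [hz.1]) (by linarith [hz.2]), add_comm z]
  ring

theorem hasSum_halfLogRatio {z : ℝ} (hz : z ∈ Ioo (0 : ℝ) 1) :
    HasSum (fun k : ℕ => z ^ (2 * k) / (2 * k + 1)) (halfLogRatio z) := by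
  have hz_abs : |z| < 1 := abs_lt.2 ⟨by linarith [hz.1], hz.2⟩
  rw [halfLogRatio_eq_of_mem_Ioo hz]
  refine ((hasSum_log_sub_log_of_abs_lt_one hz_abs).div_const (2 * z)).congr_fun fun k => ?_
  have := hz.1.ne'
  field_simp
  ring

theorem halfLogRatio_inv {u : ℝ} (hu : 0 < u) : (u ^ 2)⁻¹ * halfLogRatio u⁻¹ = halfLogRatio u := by
  have h_arg : (u⁻¹ + 1) / |u⁻¹ - 1| = (u + 1) / |u - 1| := by
    rw [show u⁻¹ - 1 = -(u - 1) / u by field_simp; ring, abs_div, abs_neg, abs_of_pos hu]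
    field_simp
    rw [add_comm]
  rw [halfLogRatio, halfLogRatio, h_arg]
  field_simp

theorem integral_pow_two_mul_div_Ioo (k : ℕ) :
    ∫ z in Ioo (0 : ℝ) 1, z ^ (2 * k) / (2 * k + 1) = 1 / (2 * (k : ℝ) + 1) ^ 2 := by
  rw [← integral_Ioc_eq_integral_Ioo, ← intervalIntegral.integral_of_le zero_le_one,
    intervalIntegral.integral_div, integral_pow]
  push_cast
  rw [one_pow, zero_pow (by omega), sub_zero, div_div, ← sq]

theorem integrableOn_pow_two_mul_div_Ioo (k : ℕ) :
    IntegrableOn (fun z : ℝ => z ^ (2 * k) / (2 * k + 1)) (Ioo 0 1) :=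
  (continuous_pow _ |>.div_const _).integrableOn_Icc.mono_set Ioo_subset_Icc_self

theorem summable_integral_norm_pow_two_mul_div_Ioo :
    Summable fun k : ℕ => ∫ z in Ioo (0 : ℝ) 1, ‖z ^ (2 * k) / (2 * k + 1)‖ := by
  refine hasSum_one_div_two_mul_add_one_sq.summable.congr fun k => ?_
  rw [← integral_pow_two_mul_div_Ioo]
  refine setIntegral_congr_fun measurableSet_Ioo fun z hz => ?_
  exact (norm_of_nonneg (by have := hz.1.le; positivity)).symm

theorem integrableOn_halfLogRatio_Ioo : IntegrableOn halfLogRatio (Ioo 0 1) :=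
  Integrable.of_hasSum_of_summable_integral_norm measurable_halfLogRatio.aestronglyMeasurable
    integrableOn_pow_two_mul_div_Ioo summable_integral_norm_pow_two_mul_div_Ioo
    ((ae_restrict_iff' measurableSet_Ioo).2 (.of_forall fun _ => hasSum_halfLogRatio))

theorem integral_halfLogRatio_Ioo : ∫ z in Ioo (0 : ℝ) 1, halfLogRatio z = π ^ 2 / 8 := by
  have h := hasSum_integral_of_summable_integral_norm integrableOn_pow_two_mul_div_Ioo
    summable_integral_norm_pow_two_mul_div_Ioo
  simp only [integral_pow_two_mul_div_Ioo] at h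
  rw [hasSum_one_div_two_mul_add_one_sq.unique h]
  exact setIntegral_congr_fun measurableSet_Ioo fun z hz => (hasSum_halfLogRatio hz).tsum_eq.symm

theorem integrableOn_halfLogRatio_Ioi_one : IntegrableOn halfLogRatio (Ioi 1) := by
  rw [integrableOn_Ioi_one_iff_integrableOn_Ioo_inv]
  exact integrableOn_halfLogRatio_Ioo.congr_fun (fun u hu => (halfLogRatio_inv hu.1).symm)
    measurableSet_Ioo

theorem integral_halfLogRatio_Ioi_one : ∫ z in Ioi (1 : ℝ), halfLogRatio z = π ^ 2 / 8 := by
  rw [integral_Ioi_one_eq_integral_Ioo_inv, ← integral_halfLogRatio_Ioo]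
  exact setIntegral_congr_fun measurableSet_Ioo fun u hu => halfLogRatio_inv hu.1

theorem integrableOn_halfLogRatio_Ioi_zero : IntegrableOn halfLogRatio (Ioi 0) := by
  rw [← Ioc_union_Ioi_eq_Ioi zero_le_one]
  exact ((integrableOn_Ioc_iff_integrableOn_Ioo).2 integrableOn_halfLogRatio_Ioo).union
    integrableOn_halfLogRatio_Ioi_one

theorem integral_halfLogRatio_Ioi_zero : ∫ z in Ioi (0 : ℝ), halfLogRatio z = π ^ 2 / 4 := by
  rw [← Ioc_union_Ioi_eq_Ioi zero_le_one, setIntegral_union Ioc_disjoint_Ioi_same measurableSet_Ioi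
    ((integrableOn_Ioc_iff_integrableOn_Ioo).2 integrableOn_halfLogRatio_Ioo)
    integrableOn_halfLogRatio_Ioi_one, integral_Ioc_eq_integral_Ioo, integral_halfLogRatio_Ioo,
    integral_halfLogRatio_Ioi_one]
  ring

/-- **Normalisation integral at `p = 2`, `q = 1`:**
`∫_0^∞ [ (1/(2z)) ln((z+1)/|z-1|) - 1/(z+1)² ] dz = π²/4 - 1`. -/
theorem normalisation_integral_p_two :
    ∫ z in Set.Ioi (0:ℝ),
        ((1 / (2 * z)) * Real.log ((z + 1) / |z - 1|) - 1 / (z + 1) ^ 2) =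
      Real.pi ^ 2 / 4 - 1 := by
  change ∫ z in Ioi 0, (halfLogRatio z - 1 / (z + 1) ^ 2) = π ^ 2 / 4 - 1
  rw [integral_sub integrableOn_halfLogRatio_Ioi_zero integrableOn_one_div_add_one_sq_Ioi_zero,
    integral_halfLogRatio_Ioi_zero, integral_one_div_add_one_sq_Ioi_zero]
end

section
/- Define, for z > 0, f(z) := (1/(2z)) · ln( (z + 1)/|z − 1| ) − 1/(z + 1)². Then the function φ(z) := (z² − 1)·f(z) is twice differentiable on (0, 1) ∪ (1, ∞) and satisfies there the second-order linear differential equation z·(d/dz)[ z·( φ'(z) − p·φ(z)/(z² − 1) ) ] − q²·φ(z) = 0 with p = 2 and q = 1. -/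
/-!
Write `L(z) = log ((z + 1) / |z - 1|)`, so that `L' = -2 / (z² - 1)`. Away from `z = ±1, 0`,
`φ = (z² - 1)/(2z) · L - (z - 1)/(z + 1)`, and the bracket of the equation collapses to
`χ = z (φ' - 2φ/(z² - 1)) = (z - 1)²/(2z) · L - 1`, whose derivative satisfies `z χ' = φ`
identically; this is the equation with `q = 1`.
-/

open Real Set

/-- Since `Real.log x = Real.log |x|`, this is `log ((z + 1) / |z - 1|)` on both sides of `z = 1`. -/
noncomputable def logRatio (z : ℝ) : ℝ := log (z + 1) - log (z - 1)

noncomputable def phiExplicit (z : ℝ) : ℝ := (z ^ 2 - 1) / (2 * z) * logRatio z - (z - 1) / (z + 1)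

noncomputable def phiExplicitDeriv (z : ℝ) : ℝ :=
  (z ^ 2 + 1) / (2 * z ^ 2) * logRatio z - 1 / z - 2 / (z + 1) ^ 2

noncomputable def chiExplicit (z : ℝ) : ℝ := (z - 1) ^ 2 / (2 * z) * logRatio z - 1

noncomputable def chiExplicitDeriv (z : ℝ) : ℝ :=
  (z ^ 2 - 1) / (2 * z ^ 2) * logRatio z - (z - 1) / (z * (z + 1))

section

variable {z : ℝ}

lemma pos_and_ne_one_and_ne_neg_one_of_mem (hz : z ∈ Ioo (0 : ℝ) 1 ∪ Ioi 1) :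
    0 < z ∧ z ≠ 1 ∧ z ≠ -1 := by
  simp only [mem_union, mem_Ioo, mem_Ioi] at hz
  grind

lemma log_div_abs_sub_one_eq_logRatio (h₁ : z ≠ 1) (h₂ : z ≠ -1) :
    log ((z + 1) / |z - 1|) = logRatio z := by
  rw [log_div (by grind) (by simp [sub_eq_zero, h₁]), log_abs, logRatio]

lemma sq_sub_one_mul_eq_phiExplicit (h₀ : z ≠ 0) (h₁ : z ≠ 1) (h₂ : z ≠ -1) :
    (z ^ 2 - 1) * (1 / (2 * z) * log ((z + 1) / |z - 1|) - 1 / (z + 1) ^ 2) = phiExplicit z := by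
  have hp : z + 1 ≠ 0 := by grind
  rw [log_div_abs_sub_one_eq_logRatio h₁ h₂, phiExplicit]
  field_simp
  ring

lemma hasDerivAt_logRatio (h₁ : z ≠ 1) (h₂ : z ≠ -1) :
    HasDerivAt logRatio (-2 / (z ^ 2 - 1)) z := by
  have hp : z + 1 ≠ 0 := by grind
  have hm : z - 1 ≠ 0 := sub_ne_zero.mpr h₁
  have hsq : z ^ 2 - 1 ≠ 0 := by grind
  refine ((((hasDerivAt_id' z).add_const 1).log hp).sub
    (((hasDerivAt_id' z).sub_const 1).log hm)).congr_deriv ?_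
  field_simp
  ring

lemma hasDerivAt_phiExplicit (h₀ : z ≠ 0) (h₁ : z ≠ 1) (h₂ : z ≠ -1) :
    HasDerivAt phiExplicit (phiExplicitDeriv z) z := by
  have hp : z + 1 ≠ 0 := by grind
  have hm : z ^ 2 - 1 ≠ 0 := by grind
  have hcoef : HasDerivAt (fun w => (w ^ 2 - 1) / (2 * w)) ((z ^ 2 + 1) / (2 * z ^ 2)) z := by
    refine (((hasDerivAt_pow 2 z).sub_const 1).div ((hasDerivAt_id' z).const_mul 2)
      (by simpa using h₀)).congr_deriv ?_
    field_simp
    ring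
  have hfrac : HasDerivAt (fun w => (w - 1) / (w + 1)) (2 / (z + 1) ^ 2) z := by
    refine (((hasDerivAt_id' z).sub_const 1).div ((hasDerivAt_id' z).add_const 1) hp).congr_deriv ?_
    field_simp
    ring
  refine ((hcoef.mul (hasDerivAt_logRatio h₁ h₂)).sub hfrac).congr_deriv ?_
  rw [phiExplicitDeriv]
  field_simp
  ring

lemma hasDerivAt_chiExplicit (h₀ : z ≠ 0) (h₁ : z ≠ 1) (h₂ : z ≠ -1) :
    HasDerivAt chiExplicit (chiExplicitDeriv z) z := by
  have hp : z + 1 ≠ 0 := by grind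
  have hm : z ^ 2 - 1 ≠ 0 := by grind
  have hcoef : HasDerivAt (fun w => (w - 1) ^ 2 / (2 * w)) ((z ^ 2 - 1) / (2 * z ^ 2)) z := by
    refine ((((hasDerivAt_id' z).sub_const 1).fun_pow 2).div ((hasDerivAt_id' z).const_mul 2)
      (by simpa using h₀)).congr_deriv ?_
    field_simp
    ring
  refine ((hcoef.mul (hasDerivAt_logRatio h₁ h₂)).sub_const 1).congr_deriv ?_
  rw [chiExplicitDeriv]
  field_simp
  ring

lemma mul_sub_eq_chiExplicit (h₀ : z ≠ 0) (h₁ : z ≠ 1) (h₂ : z ≠ -1) :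
    z * (phiExplicitDeriv z - 2 * phiExplicit z / (z ^ 2 - 1)) = chiExplicit z := by
  have hp : z + 1 ≠ 0 := by grind
  have hm : z ^ 2 - 1 ≠ 0 := by grind
  rw [phiExplicitDeriv, phiExplicit, chiExplicit]
  field_simp
  ring

lemma mul_chiExplicitDeriv (h₀ : z ≠ 0) (h₂ : z ≠ -1) :
    z * chiExplicitDeriv z = phiExplicit z := by
  have hp : z + 1 ≠ 0 := by grind
  rw [chiExplicitDeriv, phiExplicit]
  field_simp

end

/-- **The `p = 2`, `q = 1` stationary density solves the differential equation.**
With `f(z) = (1/(2z)) ln((z+1)/|z-1|) - 1/(z+1)²`, the function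
`φ(z) := (z²-1) f(z)` is twice differentiable on `(0,1) ∪ (1,∞)` and satisfies
`z (d/dz)[ z (φ' - 2 φ/(z²-1)) ] - 1² φ = 0` there (the case `p = 2`, `q = 1`). -/
theorem explicit_density_solves_ode_p_two_q_one
    (f : ℝ → ℝ)
    (hf : ∀ z : ℝ, 0 < z → f z =
      (1 / (2 * z)) * Real.log ((z + 1) / |z - 1|) - 1 / (z + 1) ^ 2)
    (φ χ : ℝ → ℝ)
    (hφ : φ = fun z => (z ^ 2 - 1) * f z)
    (hχ : χ = fun z => z * (deriv φ z - 2 * φ z / (z ^ 2 - 1))) :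
    ∀ z ∈ Set.Ioo (0:ℝ) 1 ∪ Set.Ioi 1,
      DifferentiableAt ℝ φ z ∧ DifferentiableAt ℝ χ z ∧
        z * deriv χ z - 1 ^ 2 * φ z = 0 := by
  set S := Ioo (0 : ℝ) 1 ∪ Ioi 1
  have hS : IsOpen S := isOpen_Ioo.union isOpen_Ioi
  have hφ_eq : EqOn φ phiExplicit S := fun w hw => by
    obtain ⟨hpos, h₁, h₂⟩ := pos_and_ne_one_and_ne_neg_one_of_mem hw
    simp only [hφ]
    rw [hf w hpos, sq_sub_one_mul_eq_phiExplicit hpos.ne' h₁ h₂]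
  have hφ_deriv : ∀ w ∈ S, HasDerivAt φ (phiExplicitDeriv w) w := fun w hw => by
    obtain ⟨hpos, h₁, h₂⟩ := pos_and_ne_one_and_ne_neg_one_of_mem hw
    exact (hasDerivAt_phiExplicit hpos.ne' h₁ h₂).congr_of_eventuallyEq
      (hφ_eq.eventuallyEq_of_mem (hS.mem_nhds hw))
  have hχ_eq : EqOn χ chiExplicit S := fun w hw => by
    obtain ⟨hpos, h₁, h₂⟩ := pos_and_ne_one_and_ne_neg_one_of_mem hw
    simp only [hχ]
    rw [(hφ_deriv w hw).deriv, hφ_eq hw, mul_sub_eq_chiExplicit hpos.ne' h₁ h₂]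
  intro z hz
  obtain ⟨hpos, h₁, h₂⟩ := pos_and_ne_one_and_ne_neg_one_of_mem hz
  have hχ_deriv : HasDerivAt χ (chiExplicitDeriv z) z :=
    (hasDerivAt_chiExplicit hpos.ne' h₁ h₂).congr_of_eventuallyEq
      (hχ_eq.eventuallyEq_of_mem (hS.mem_nhds hz))
  refine ⟨(hφ_deriv z hz).differentiableAt, hχ_deriv.differentiableAt, ?_⟩
  rw [hχ_deriv.deriv, mul_chiExplicitDeriv hpos.ne' h₂, hφ_eq hz]
  ring
end

section
/- Let p > 0, p ≠ 2, and let A be defined by 1/A = (1/2)·(ψ(p/4) − ψ(1/2))/(p/4 − 1/2) − 2/p. For z > 0, let f(z) := (A/(p − 2)) · (1/z) · [ 1 − (1 + p·z + z²) / ( |z − 1|^{1 − p/2} · (z + 1)^{1 + p/2} ) ]. Then ∫_0^∞ z·f(z) dz = (p/2) · (1 − 4/p²) / ( ψ(p/4) − ψ(1/2) + 2/p − 1 ). -/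
open MeasureTheory

/-- The digamma function: the logarithmic derivative of the Gamma function. -/
noncomputable def digamma (x : ℝ) : ℝ :=
  deriv (fun x => Real.log (Real.Gamma x)) x

/-!
Writing `g(z) = (1 + p z + z²) / (|z - 1|^(1 - p/2) (z + 1)^(1 + p/2))`, one has
`z f(z) = A/(p - 2) · (1 - g(z))`, and `1 - g` has an elementary primitive on each side of `z = 1`,
namely `z ∓ (z + 2/p) (±(z - 1)/(z + 1))^(p/2)`. Both pieces equal `1` at `z = 1`; the left one
is `2/p` at `0` and the right one tends to `p - 2/p` at infinity, so `∫₀^∞ (1 - g) = p - 4/p`.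
The improper integrals converge because `1 - g` has the constant sign of `p - 2` (Bernoulli's
inequality). The digamma values only enter through `1/A = 2 (ψ(p/4) - ψ(1/2) + 2/p - 1)/(p - 2)`,
and the theorem is then an identity of rational functions of `p`.
-/

open Set Filter Real Topology

theorem sub_one_mul_rpow_sub_one_add_mul_nonneg {r y : ℝ} (hr : 0 ≤ r) (hy : 0 ≤ y) :
    0 ≤ (r - 1) * (y ^ r - (1 + r * (y - 1))) := by
  have hs : -1 ≤ y - 1 := by linarith
  rcases le_total 1 r with h | h
  · have := one_add_mul_self_le_rpow_one_add hs h
    rw [add_sub_cancel] at this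
    exact mul_nonneg (by linarith) (by linarith)
  · have := rpow_one_add_le_one_add_mul_self hs hr h
    rw [add_sub_cancel] at this
    exact mul_nonneg_of_nonpos_of_nonpos (by linarith) (by linarith)

namespace RiccatiDensity

noncomputable def kernel (p z : ℝ) : ℝ :=
  (1 + p * z + z ^ 2) / (|z - 1| ^ (1 - p / 2) * (z + 1) ^ (1 + p / 2))

/-- With `σ = 1` this is a primitive of `1 - kernel p` on `(1, ∞)`, with `σ = -1` on `(-1, 1)`. -/
noncomputable def primitive (p σ z : ℝ) : ℝ :=
  z - σ * (z + 2 / p) * (σ * (z - 1) / (z + 1)) ^ (p / 2)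

variable {p z : ℝ}

theorem kernel_eq (hz : -1 < z) (hz1 : z ≠ 1) :
    kernel p z = (1 + p * z + z ^ 2) / (|z - 1| * (z + 1) * ((z + 1) / |z - 1|) ^ (p / 2)) := by
  have hw : 0 < |z - 1| := abs_pos.2 (sub_ne_zero.2 hz1)
  have hz' : 0 < z + 1 := by linarith
  rw [kernel, rpow_sub hw, rpow_add hz', div_rpow hz'.le hw.le, rpow_one, rpow_one]
  have := rpow_pos_of_pos hw (p / 2)
  have := rpow_pos_of_pos hz' (p / 2)
  field_simp

theorem sub_two_mul_one_sub_kernel_nonneg (hp : 0 ≤ p) (hz : 0 < z) (hz1 : z ≠ 1) :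
    0 ≤ (p - 2) * (1 - kernel p z) := by
  set w := |z - 1| with hw_def
  set y := (z + 1) / w with hy_def
  have hw : 0 < w := abs_pos.2 (sub_ne_zero.2 hz1)
  have hy : 0 < y := by positivity
  have hD : 0 < w * (z + 1) * y ^ (p / 2) := by positivity
  have hwz : w * (z + 1) ≤ z ^ 2 + 1 := by
    rcases abs_cases (z - 1) with ⟨h, _⟩ | ⟨h, _⟩ <;> rw [hw_def, h] <;> nlinarith
  have hbernoulli := sub_one_mul_rpow_sub_one_add_mul_nonneg (by linarith : 0 ≤ p / 2) hy.le
  have hsplit : (p - 2) * (w * (z + 1) * y ^ (p / 2) - (1 + p * z + z ^ 2)) =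
      2 * w * (z + 1) * ((p / 2 - 1) * (y ^ (p / 2) - (1 + p / 2 * (y - 1))))
        + 2 * (p / 2 - 1) ^ 2 * (z ^ 2 + 1 - w * (z + 1)) := by
    rw [hy_def]; field_simp; ring
  rw [kernel_eq (by linarith) hz1, one_sub_div hD.ne', mul_div_assoc']
  refine div_nonneg ?_ hD.le
  rw [hsplit]
  have := sq_nonneg (p / 2 - 1)
  have : 0 ≤ z ^ 2 + 1 - w * (z + 1) := by linarith
  positivity

theorem hasDerivAt_primitive {σ : ℝ} (hp : p ≠ 0) (hz : -1 < z) (hz1 : z ≠ 1)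
    (hσ : σ * (z - 1) = |z - 1|) :
    HasDerivAt (primitive p σ) (1 - kernel p z) z := by
  have hz1' : z - 1 ≠ 0 := sub_ne_zero.2 hz1
  have hz' : 0 < z + 1 := by linarith
  have hσ2 : σ ^ 2 = 1 := by
    have h := congrArg (· ^ 2) hσ
    simp only [mul_pow, sq_abs] at h
    exact (mul_eq_right₀ (pow_ne_zero 2 hz1')).1 h
  have hσ0 : σ ≠ 0 := by rintro rfl; simp at hσ2
  set Q := σ * (z - 1) / (z + 1) with hQ_def
  have hQ : Q = |z - 1| / (z + 1) := by rw [hQ_def, hσ]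
  have hQpos : 0 < Q := by rw [hQ]; positivity
  have hratio : HasDerivAt (fun x => σ * (x - 1) / (x + 1)) (2 * σ / (z + 1) ^ 2) z := by
    refine ((((hasDerivAt_id' z).sub_const 1).const_mul σ).fun_div
      ((hasDerivAt_id' z).add_const 1) hz'.ne').congr_deriv ?_
    field_simp; ring
  refine ((hasDerivAt_id' z).fun_sub ((((hasDerivAt_id' z).add_const (2 / p)).const_mul σ).fun_mul
    (hratio.rpow_const (p := p / 2) (Or.inl hQpos.ne')))).congr_deriv ?_
  rw [kernel_eq hz hz1, ← hQ_def, rpow_sub_one hQpos.ne',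
    show (z + 1) / |z - 1| = Q⁻¹ by rw [hQ, inv_div], inv_rpow hQpos.le]
  have hX : Q ^ (p / 2) ≠ 0 := (rpow_pos_of_pos hQpos _).ne'
  generalize Q ^ (p / 2) = X at hX ⊢
  rw [hQ_def, ← hσ]
  field_simp
  linear_combination (-(1 + p * z + z ^ 2) * X) * hσ2

theorem hasDerivAt_primitive_one (hp : p ≠ 0) (hz : 1 < z) :
    HasDerivAt (primitive p 1) (1 - kernel p z) z :=
  hasDerivAt_primitive hp (by linarith) hz.ne' (by rw [one_mul, abs_of_pos (by linarith)])

theorem hasDerivAt_primitive_neg_one (hp : p ≠ 0) (hz : z ∈ Ioo 0 1) :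
    HasDerivAt (primitive p (-1)) (1 - kernel p z) z :=
  hasDerivAt_primitive hp (by linarith [hz.1]) hz.2.ne
    (by rw [abs_of_neg (by linarith [hz.2])]; ring)

theorem continuousOn_primitive (hp : 0 < p) (σ : ℝ) :
    ContinuousOn (primitive p σ) (Ioi (-1)) := by
  have hden : ∀ x ∈ Ioi (-1 : ℝ), x + 1 ≠ 0 := fun x (hx : -1 < x) => by linarith
  refine continuousOn_id.sub ((continuousOn_const.mul (continuousOn_id.add continuousOn_const)).mul
    (ContinuousOn.rpow_const ?_ fun _ _ => Or.inr (by positivity)))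
  exact (continuousOn_const.mul (continuousOn_id.sub continuousOn_const)).div
    (continuousOn_id.add continuousOn_const) hden

theorem continuousWithinAt_primitive_one (hp : 0 < p) (σ : ℝ) :
    ContinuousWithinAt (primitive p σ) (Ici 1) 1 :=
  ((continuousOn_primitive hp σ).continuousAt (Ioi_mem_nhds (by norm_num))).continuousWithinAt

theorem continuousOn_primitive_Icc (hp : 0 < p) (σ : ℝ) :
    ContinuousOn (primitive p σ) (Icc 0 1) :=
  (continuousOn_primitive hp σ).mono fun z (hz : z ∈ Icc 0 1) => show -1 < z by linarith [hz.1]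

theorem primitive_one (hp : 0 < p) (σ : ℝ) : primitive p σ 1 = 1 := by
  simp [primitive, zero_rpow (by positivity : p / 2 ≠ 0)]

theorem primitive_neg_one_zero : primitive p (-1) 0 = 2 / p := by
  simp [primitive]

theorem tendsto_primitive_one_atTop : Tendsto (primitive p 1) atTop (𝓝 (p - 2 / p)) := by
  set r : ℝ → ℝ := fun t => ((1 - t) / (1 + t)) ^ (p / 2)
  have hr : HasDerivAt r (-p) 0 := by
    refine ((((hasDerivAt_id' (0 : ℝ)).const_sub 1).fun_div
      ((hasDerivAt_id' (0 : ℝ)).const_add 1) (by norm_num)).rpow_const (p := p / 2)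
      (Or.inl (by norm_num))).congr_deriv ?_
    norm_num
    ring
  have hslope : Tendsto (fun t => (r t - 1) / t) (𝓝[>] 0) (𝓝 (-p)) := by
    refine ((hasDerivAt_iff_tendsto_slope.1 hr).mono_left
      (nhdsWithin_mono _ fun t ht => ne_of_gt ht)).congr fun t => ?_
    simp [slope_def_field, r]
  have hr_cont : Tendsto r (𝓝[>] 0) (𝓝 1) := by
    simpa [r] using hr.continuousAt.tendsto.mono_left nhdsWithin_le_nhds
  have hlim := (hslope.neg.sub (hr_cont.const_mul (2 / p))).comp tendsto_inv_atTop_nhdsGT_zero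
  rw [neg_neg, mul_one] at hlim
  refine hlim.congr' ?_
  filter_upwards [eventually_gt_atTop (0 : ℝ)] with z hz
  have hbase : (1 - z⁻¹) / (1 + z⁻¹) = 1 * (z - 1) / (z + 1) := by
    field_simp
  simp only [Function.comp, r, hbase, primitive, div_inv_eq_mul]
  ring

theorem integrableOn_one_sub_kernel_Ioi_one (hp : 0 < p) (hp2 : p ≠ 2) :
    IntegrableOn (fun z => 1 - kernel p z) (Ioi 1) := by
  refine (integrable_const_mul_iff (isUnit_iff_ne_zero.2 (sub_ne_zero.2 hp2)) _).1 ?_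
  exact integrableOn_Ioi_deriv_of_nonneg
    ((continuousWithinAt_primitive_one hp 1).const_mul (p - 2))
    (fun z hz => (hasDerivAt_primitive_one hp.ne' hz).const_mul (p - 2))
    (fun z (hz : 1 < z) => sub_two_mul_one_sub_kernel_nonneg hp.le (by linarith) hz.ne')
    (tendsto_primitive_one_atTop.const_mul (p - 2))

theorem integral_one_sub_kernel_Ioi_one (hp : 0 < p) (hp2 : p ≠ 2) :
    ∫ z in Ioi 1, (1 - kernel p z) = p - 2 / p - 1 := by
  rw [integral_Ioi_of_hasDerivAt_of_tendsto (continuousWithinAt_primitive_one hp 1)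
    (fun z hz => hasDerivAt_primitive_one hp.ne' hz) (integrableOn_one_sub_kernel_Ioi_one hp hp2)
    tendsto_primitive_one_atTop, primitive_one hp]

theorem integrableOn_one_sub_kernel_Ioc_zero_one (hp : 0 < p) (hp2 : p ≠ 2) :
    IntegrableOn (fun z => 1 - kernel p z) (Ioc 0 1) := by
  refine (integrable_const_mul_iff (isUnit_iff_ne_zero.2 (sub_ne_zero.2 hp2)) _).1 ?_
  exact intervalIntegral.integrableOn_deriv_of_nonneg
    (continuousOn_const.mul (continuousOn_primitive_Icc hp (-1)))
    (fun z hz => (hasDerivAt_primitive_neg_one hp.ne' hz).const_mul (p - 2))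
    (fun z hz => sub_two_mul_one_sub_kernel_nonneg hp.le hz.1 hz.2.ne)

theorem integral_one_sub_kernel_Ioc_zero_one (hp : 0 < p) (hp2 : p ≠ 2) :
    ∫ z in Ioc 0 1, (1 - kernel p z) = 1 - 2 / p := by
  rw [← intervalIntegral.integral_of_le zero_le_one,
    intervalIntegral.integral_eq_sub_of_hasDerivAt_of_le zero_le_one
      (continuousOn_primitive_Icc hp (-1)) (fun z hz => hasDerivAt_primitive_neg_one hp.ne' hz)
      ((intervalIntegrable_iff_integrableOn_Ioc_of_le zero_le_one).2
        (integrableOn_one_sub_kernel_Ioc_zero_one hp hp2)),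
    primitive_one hp, primitive_neg_one_zero]

theorem integral_one_sub_kernel_Ioi_zero (hp : 0 < p) (hp2 : p ≠ 2) :
    ∫ z in Ioi 0, (1 - kernel p z) = p - 4 / p := by
  rw [← Ioc_union_Ioi_eq_Ioi zero_le_one, setIntegral_union (Ioc_disjoint_Ioi le_rfl)
    measurableSet_Ioi (integrableOn_one_sub_kernel_Ioc_zero_one hp hp2)
    (integrableOn_one_sub_kernel_Ioi_one hp hp2), integral_one_sub_kernel_Ioc_zero_one hp hp2,
    integral_one_sub_kernel_Ioi_one hp hp2]
  ring

/-- Also in the degenerate case `Δ + 2/p - 1 = 0`, where both sides are `0` (as `0⁻¹ = 0`). -/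
theorem normalization_eq {A Δ : ℝ} (hp : p ≠ 0) (hp2 : p ≠ 2)
    (hA : 1 / A = (1 / 2) * (Δ / (p / 4 - 1 / 2)) - 2 / p) :
    A = (p - 2) / (2 * (Δ + 2 / p - 1)) := by
  have hp2' : p - 2 ≠ 0 := sub_ne_zero.2 hp2
  have h1A : 1 / A = 2 * (Δ + 2 / p - 1) / (p - 2) := by
    rw [hA, show p / 4 - 1 / 2 = (p - 2) / 4 by ring]; field_simp; ring
  rw [← inv_inv A, ← one_div A, h1A, inv_div]

end RiccatiDensity

/-- **The Lyapunov exponent at energy `E = -1` for `q = 1`.**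
With the normalised stationary density
`f(z) = (A/(p-2)) (1/z) [1 - (1+pz+z²)/(|z-1|^{1-p/2} (z+1)^{1+p/2})]` where
`1/A = (1/2)(ψ(p/4)-ψ(1/2))/(p/4-1/2) - 2/p`,
one has `∫_0^∞ z f(z) dz = (p/2)(1-4/p²)/(ψ(p/4)-ψ(1/2)+2/p-1)`. -/
theorem lyapunov_exponent_q_one
    (p A : ℝ) (hp : 0 < p) (hp2 : p ≠ 2)
    (hA : 1 / A = (1 / 2) * ((digamma (p / 4) - digamma (1 / 2)) / (p / 4 - 1 / 2))
        - 2 / p)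
    (f : ℝ → ℝ)
    (hf : ∀ z : ℝ, 0 < z → f z =
      A / (p - 2) * (1 / z) *
        (1 - (1 + p * z + z ^ 2) /
          (|z - 1| ^ (1 - p / 2) * (z + 1) ^ (1 + p / 2)))) :
    ∫ z in Set.Ioi (0:ℝ), z * f z =
      (p / 2) * (1 - 4 / p ^ 2) /
        (digamma (p / 4) - digamma (1 / 2) + 2 / p - 1) := by
  have hzf : ∀ z ∈ Ioi (0 : ℝ), z * f z = A / (p - 2) * (1 - RiccatiDensity.kernel p z) :=
    fun z (hz : 0 < z) => by
      rw [hf z hz, RiccatiDensity.kernel]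
      field_simp
  rw [setIntegral_congr_fun measurableSet_Ioi hzf, integral_const_mul,
    RiccatiDensity.integral_one_sub_kernel_Ioi_zero hp hp2,
    RiccatiDensity.normalization_eq hp.ne' hp2 hA]
  have hp2' : p - 2 ≠ 0 := sub_ne_zero.2 hp2
  field_simp
end

section
/- Let p > 0 and q > 0, and let (yₙ)_{n≥0} be the sequence of real numbers defined by y₀ = 1, y₁ = p·q/(2q + 1), and the recurrence (n + 2)(n + 2q + 2)·y_{n+2} = p·(n + q + 1)·y_{n+1} + n·(n + 2q)·yₙ for n ≥ 0. Then yₙ ≥ 0 for every n, the power series ∑_{n≥0} yₙ·zⁿ has radius of convergence at least 1, and its sum y(z) satisfies y(z) ≥ 1 > 0 for every z ∈ [0, 1). -/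
/-!
The coefficients are nonnegative because every coefficient of the recurrence is. For convergence
fix `|z| < r < 1`: the rescaled coefficients `yₙ rⁿ` satisfy a recurrence of the same shape with
weights `p(n+q+1) r` and `n(n+2q) r²`, whose sum is eventually at most `(n+2)(n+2q+2)`. Hence
`yₙ rⁿ` is eventually bounded by the larger of two consecutive terms, and `∑ yₙ zⁿ` is dominated
by a geometric series of ratio `|z| / r`. The lower bound `1` is the constant term `y₀`.
-/

open Filter

section ThreeTermRecurrence

variable {a b c y : ℕ → ℝ}

theorem nonneg_of_three_term_recurrence
    (hrec : ∀ n, c n * y (n + 2) = a n * y (n + 1) + b n * y n)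
    (hc : ∀ n, 0 < c n) (ha : ∀ n, 0 ≤ a n) (hb : ∀ n, 0 ≤ b n)
    (h0 : 0 ≤ y 0) (h1 : 0 ≤ y 1) (n : ℕ) : 0 ≤ y n := by
  induction n using Nat.twoStepInduction with
  | zero => exact h0
  | one => exact h1
  | more n ih₀ ih₁ =>
    refine (mul_nonneg_iff_of_pos_left (hc n)).1 ?_
    rw [hrec n]
    exact add_nonneg (mul_nonneg (ha n) ih₁) (mul_nonneg (hb n) ih₀)

theorem le_max_of_three_term_recurrence
    (hrec : ∀ n, c n * y (n + 2) = a n * y (n + 1) + b n * y n)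
    (hc : ∀ n, 0 < c n) (ha : ∀ n, 0 ≤ a n) (hb : ∀ n, 0 ≤ b n)
    {N : ℕ} (hy : 0 ≤ y N) (hdom : ∀ n ≥ N, a n + b n ≤ c n) :
    ∀ n ≥ N, y n ≤ max (y N) (y (N + 1)) := by
  set M := max (y N) (y (N + 1))
  have hM : 0 ≤ M := hy.trans (le_max_left _ _)
  suffices ∀ k, y (N + k) ≤ M from fun n hn => by
    simpa [Nat.add_sub_cancel' hn] using this (n - N)
  intro k
  induction k using Nat.twoStepInduction with
  | zero => exact le_max_left _ _
  | one => exact le_max_right _ _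
  | more k ih₀ ih₁ =>
    refine le_of_mul_le_mul_left ?_ (hc (N + k))
    calc c (N + k) * y (N + (k + 2))
        = a (N + k) * y (N + k + 1) + b (N + k) * y (N + k) := hrec (N + k)
      _ ≤ a (N + k) * M + b (N + k) * M :=
        add_le_add (mul_le_mul_of_nonneg_left ih₁ (ha _)) (mul_le_mul_of_nonneg_left ih₀ (hb _))
      _ = (a (N + k) + b (N + k)) * M := by ring
      _ ≤ c (N + k) * M := by gcongr; exact hdom _ (Nat.le_add_right _ _)

theorem eventually_mul_pow_le_of_three_term_recurrence
    (hrec : ∀ n, c n * y (n + 2) = a n * y (n + 1) + b n * y n)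
    (hc : ∀ n, 0 < c n) (ha : ∀ n, 0 ≤ a n) (hb : ∀ n, 0 ≤ b n)
    (hy : ∀ n, 0 ≤ y n) {r : ℝ} (hr : 0 ≤ r)
    (hdom : ∀ᶠ n in atTop, a n * r + b n * r ^ 2 ≤ c n) :
    ∃ M, ∀ᶠ n in atTop, |y n| * r ^ n ≤ M := by
  obtain ⟨N, hN⟩ := eventually_atTop.1 hdom
  have hrec' : ∀ n, c n * (y (n + 2) * r ^ (n + 2)) =
      a n * r * (y (n + 1) * r ^ (n + 1)) + b n * r ^ 2 * (y n * r ^ n) := fun n => by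
    linear_combination r ^ (n + 2) * hrec n
  refine ⟨max (y N * r ^ N) (y (N + 1) * r ^ (N + 1)),
    eventually_atTop.2 ⟨N, fun n hn => ?_⟩⟩
  rw [abs_of_nonneg (hy n)]
  exact le_max_of_three_term_recurrence (y := fun n => y n * r ^ n) hrec' hc
    (fun n => mul_nonneg (ha n) hr) (fun n => mul_nonneg (hb n) (sq_nonneg r))
    (mul_nonneg (hy N) (pow_nonneg hr N)) hN n hn

end ThreeTermRecurrence

theorem summable_mul_pow_of_eventually_le {y : ℕ → ℝ} {r M z : ℝ}
    (hM : ∀ᶠ n in atTop, |y n| * r ^ n ≤ M) (hz : |z| < r) :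
    Summable fun n => y n * z ^ n := by
  have hr : 0 < r := (abs_nonneg z).trans_lt hz
  refine .of_norm_bounded_eventually_nat
    ((summable_geometric_of_lt_one (by positivity) ((div_lt_one hr).2 hz)).mul_left M) ?_
  filter_upwards [hM] with n hn
  calc ‖y n * z ^ n‖ = |y n| * r ^ n * (|z| / r) ^ n := by
        rw [Real.norm_eq_abs, abs_mul, abs_pow, div_pow, mul_assoc,
          mul_div_cancel₀ _ (pow_pos hr n).ne']
    _ ≤ M * (|z| / r) ^ n := by gcongr

theorem eventually_heun_coeff_dominated {p q r : ℝ} (hp : 0 ≤ p) (hq : 0 ≤ q)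
    (hr₀ : 0 ≤ r) (hr₁ : r < 1) :
    ∀ᶠ n : ℕ in atTop, p * ((n : ℝ) + q + 1) * r + (n : ℝ) * ((n : ℝ) + 2 * q) * r ^ 2 ≤
      ((n : ℝ) + 2) * ((n : ℝ) + 2 * q + 2) := by
  -- For `n ≥ 2p / (1 - r²)` the loss `n(n+2q)(1 - r²)` in the quadratic term pays for `p(n+q+1)`.
  have hr2 : 0 < 1 - r ^ 2 := by nlinarith
  obtain ⟨N, hN⟩ := exists_nat_ge (2 * p / (1 - r ^ 2))
  filter_upwards [eventually_ge_atTop N, eventually_ge_atTop 1] with n hnN hn1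
  have hn : 2 * p ≤ n * (1 - r ^ 2) := by
    rw [div_le_iff₀ hr2] at hN
    exact hN.trans (mul_le_mul_of_nonneg_right (by exact_mod_cast hnN) hr2.le)
  have hn1' : (1 : ℝ) ≤ n := by exact_mod_cast hn1
  nlinarith [mul_le_mul_of_nonneg_right hn (by linarith : (0:ℝ) ≤ n + 2 * q),
    mul_le_mul_of_nonneg_left hr₁.le (by positivity : (0:ℝ) ≤ p * (n + q + 1))]

/-- **Positivity and convergence of the Heun series.**
For `p, q > 0`, the coefficients of the Heun function
`Hl(-1, -pq; 0, 2q, 2q+1, p/2; z)`, defined by `y₀ = 1`, `y₁ = pq/(2q+1)` and the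
recurrence `(n+2)(n+2q+2) y_{n+2} = p(n+q+1) y_{n+1} + n(n+2q) yₙ`, are
nonnegative, the power series `∑ yₙ zⁿ` has radius of convergence at least `1`,
and its sum is `≥ 1` on `[0, 1)`. -/
theorem heun_series_positive
    (p q : ℝ) (hp : 0 < p) (hq : 0 < q) (y : ℕ → ℝ)
    (h0 : y 0 = 1) (h1 : y 1 = p * q / (2 * q + 1))
    (hrec : ∀ n : ℕ,
      ((n : ℝ) + 2) * ((n : ℝ) + 2 * q + 2) * y (n + 2) =
        p * ((n : ℝ) + q + 1) * y (n + 1) + (n : ℝ) * ((n : ℝ) + 2 * q) * y n) :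
    (∀ n : ℕ, 0 ≤ y n) ∧
    (∀ z : ℝ, |z| < 1 → Summable (fun n : ℕ => y n * z ^ n)) ∧
    (∀ z : ℝ, 0 ≤ z → z < 1 → 1 ≤ ∑' n : ℕ, y n * z ^ n) := by
  have hc : ∀ n : ℕ, 0 < ((n : ℝ) + 2) * ((n : ℝ) + 2 * q + 2) := fun n => by positivity
  have ha : ∀ n : ℕ, 0 ≤ p * ((n : ℝ) + q + 1) := fun n => by positivity
  have hb : ∀ n : ℕ, 0 ≤ (n : ℝ) * ((n : ℝ) + 2 * q) := fun n => by positivity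
  have hy : ∀ n, 0 ≤ y n :=
    nonneg_of_three_term_recurrence hrec hc ha hb (by rw [h0]; exact zero_le_one)
      (by rw [h1]; positivity)
  have hsum : ∀ z : ℝ, |z| < 1 → Summable (fun n : ℕ => y n * z ^ n) := by
    intro z hz
    obtain ⟨r, hzr, hr₁⟩ := exists_between hz
    have hr₀ : 0 ≤ r := (abs_nonneg z).trans hzr.le
    obtain ⟨M, hM⟩ := eventually_mul_pow_le_of_three_term_recurrence hrec hc ha hb hy hr₀
      (eventually_heun_coeff_dominated hp.le hq.le hr₀ hr₁)
    exact summable_mul_pow_of_eventually_le hM hzr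
  refine ⟨hy, hsum, fun z hz₀ hz₁ => ?_⟩
  calc (1 : ℝ) = y 0 * z ^ 0 := by rw [h0, pow_zero, mul_one]
    _ ≤ ∑' n, y n * z ^ n := (hsum z (by rwa [abs_of_nonneg hz₀])).le_tsum 0
      fun n _ => mul_nonneg (hy n) (pow_nonneg hz₀ n)
end

section
/- Let p > 0 and q > 0, and let (yₙ)_{n≥0} be the sequence of real numbers defined by y₀ = 1, y₁ = p·q/(2q + 1), and the recurrence (n + 2)(n + 2q + 2)·y_{n+2} = p·(n + q + 1)·y_{n+1} + n·(n + 2q)·yₙ for n ≥ 0. Then the sum y(z) := ∑_{n≥0} yₙ·zⁿ is twice differentiable on (0, 1) and satisfies there the differential equation y''(z) + [ (2q + 1)/z + (p/2)/(z − 1) + (−p/2)/(z + 1) ]·y'(z) + ( p·q / ( z·(z − 1)·(z + 1) ) )·y(z) = 0. -/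
open Filter Topology FormalMultilinearSeries

/-!
The coefficients are nonnegative and the recurrence gives
`y (n + 2) ≤ p / (n + 1) * y (n + 1) + y n`, a recurrence whose characteristic equation tends to
`B ^ 2 = 1`; hence `y n = O(B ^ n)` for every `B > 1`, and the series has radius at least `1`.
Inside the unit disc it can be differentiated twice term by term. Multiplying the equation by
`z (z - 1) (z + 1)` turns it into `z (z² - 1) y'' + ((2q + 1)(z² - 1) + p z) y' + p q y = 0`;
substituting the three series, the coefficient of `z ^ (n + 1)` is the recurrence at `n`, and the
constant term is `p q y 0 - (2q + 1) y 1 = 0`.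
-/

section PowerSeries

variable {𝕜 : Type*} [RCLike 𝕜]

def derivCoeffs (a : ℕ → 𝕜) (n : ℕ) : 𝕜 := (n + 1) * a (n + 1)

theorem radius_ofScalars_le_derivCoeffs (a : ℕ → 𝕜) :
    (ofScalars 𝕜 a).radius ≤ (ofScalars 𝕜 (derivCoeffs a)).radius := by
  refine ENNReal.le_of_forall_nnreal_lt fun r hr => ?_
  rcases eq_or_ne r 0 with rfl | hr0
  · simp
  obtain ⟨ρ, hρ, C, -, hbound⟩ := (ofScalars 𝕜 a).norm_mul_pow_le_mul_pow_of_lt_radius hr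
  have hgeom : Summable fun n : ℕ => (n : ℝ) * ρ ^ n := by
    simpa using summable_pow_mul_geometric_of_norm_lt_one 1
      (by rw [Real.norm_of_nonneg hρ.1.le]; exact hρ.2)
  have hshift : Summable fun n : ℕ => C / r * (((n + 1 : ℕ) : ℝ) * ρ ^ (n + 1)) :=
    ((summable_nat_add_iff 1).mpr hgeom).mul_left _
  refine (ofScalars 𝕜 (derivCoeffs a)).le_radius_of_summable_norm <|
    .of_nonneg_of_le (fun n => by positivity) (fun n => ?_) hshift
  have hr' : (0 : ℝ) < r := by positivity
  have h := hbound (n + 1)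
  rw [ofScalars_norm] at h ⊢
  calc ‖derivCoeffs a n‖ * (r : ℝ) ^ n = (n + 1) * (‖a (n + 1)‖ * (r : ℝ) ^ (n + 1)) / r := by
        rw [derivCoeffs, norm_mul, pow_succ, ← Nat.cast_add_one, RCLike.norm_natCast]
        field_simp
        push_cast
        ring
    _ ≤ (n + 1) * (C * ρ ^ (n + 1)) / r := by gcongr
    _ = C / r * (((n + 1 : ℕ) : ℝ) * ρ ^ (n + 1)) := by push_cast; ring

variable {a : ℕ → 𝕜} {z : 𝕜}

theorem summable_mul_pow_of_lt_radius (hz : ‖z‖ₑ < (ofScalars 𝕜 a).radius) :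
    Summable fun n => a n * z ^ n := by
  simpa [ofScalars_apply_eq, mul_comm] using
    ((ofScalars 𝕜 a).summable_norm_apply (mem_eball_zero_iff.mpr hz)).of_norm

theorem hasDerivAt_tsum_mul_pow (hz : ‖z‖ₑ < (ofScalars 𝕜 a).radius) :
    HasDerivAt (fun w => ∑' n, a n * w ^ n) (∑' n, derivCoeffs a n * z ^ n) z := by
  obtain ⟨r, hzr, hr⟩ := ENNReal.lt_iff_exists_nnreal_btwn.mp hz
  have hzr' : z ∈ Metric.ball (0 : 𝕜) r := by
    rw [mem_ball_zero_iff, ← coe_nnnorm]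
    exact_mod_cast hzr
  have hderiv : Summable fun n => ‖derivCoeffs a n‖ * (r : ℝ) ^ n := by
    simpa only [ofScalars_norm] using
      (ofScalars 𝕜 (derivCoeffs a)).summable_norm_mul_pow
        (hr.trans_le (radius_ofScalars_le_derivCoeffs a))
  have hu : Summable fun n : ℕ => ‖(n : 𝕜) * a n‖ * (r : ℝ) ^ (n - 1) := by
    refine (summable_nat_add_iff 1).mp (hderiv.congr fun n => ?_)
    simp [derivCoeffs]
  have hbound : ∀ n, ∀ w ∈ Metric.ball (0 : 𝕜) r,
      ‖a n * (n * w ^ (n - 1))‖ ≤ ‖(n : 𝕜) * a n‖ * (r : ℝ) ^ (n - 1) := by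
    intro n w hw
    rw [mem_ball_zero_iff] at hw
    rw [mul_left_comm, ← mul_assoc, norm_mul, norm_pow]
    gcongr
  have h := hasDerivAt_tsum_of_isPreconnected hu Metric.isOpen_ball
    (convex_ball (0 : 𝕜) r).isPreconnected
    (fun n w _ => (hasDerivAt_pow n w).const_mul (a n)) hbound hzr'
    (summable_mul_pow_of_lt_radius hz) hzr'
  have hsum : Summable fun n => a n * (n * z ^ (n - 1)) :=
    .of_norm_bounded hu fun n => hbound n z hzr'
  rw [hsum.tsum_eq_zero_add, Nat.cast_zero, zero_mul, mul_zero, zero_add] at h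
  refine h.congr_deriv (tsum_congr fun n => ?_)
  rw [derivCoeffs, Nat.add_sub_cancel, Nat.cast_add_one]
  ring

theorem deriv_tsum_mul_pow_eventuallyEq (hz : ‖z‖ₑ < (ofScalars 𝕜 a).radius) :
    deriv (fun w => ∑' n, a n * w ^ n) =ᶠ[𝓝 z] fun w => ∑' n, derivCoeffs a n * w ^ n := by
  filter_upwards [Metric.isOpen_eball.mem_nhds (mem_eball_zero_iff.mpr hz)] with w hw
  exact (hasDerivAt_tsum_mul_pow (mem_eball_zero_iff.mp hw)).deriv

theorem hasDerivAt_deriv_tsum_mul_pow (hz : ‖z‖ₑ < (ofScalars 𝕜 a).radius) :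
    HasDerivAt (deriv fun w => ∑' n, a n * w ^ n)
      (∑' n, derivCoeffs (derivCoeffs a) n * z ^ n) z :=
  (hasDerivAt_tsum_mul_pow (hz.trans_le (radius_ofScalars_le_derivCoeffs a))).congr_of_eventuallyEq
    (deriv_tsum_mul_pow_eventuallyEq hz)

end PowerSeries

theorem hasSum_of_hasSum_nat_add {G : Type*} [AddCommGroup G] [TopologicalSpace G]
    [IsTopologicalAddGroup G] {f : ℕ → G} {s : G} (k : ℕ) (hf : ∀ i < k, f i = 0)
    (h : HasSum (fun n => f (n + k)) s) : HasSum f s := by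
  rw [← hasSum_nat_add_iff' k, Finset.sum_eq_zero fun i hi => hf i (Finset.mem_range.mp hi),
    sub_zero]
  exact h

theorem exists_le_mul_pow_of_le_add {u α β : ℕ → ℝ} {B : ℝ} (hB : 0 < B)
    (hα : ∀ n, 0 ≤ α n) (hβ : ∀ n, 0 ≤ β n) (hu : ∀ n, u (n + 2) ≤ α n * u (n + 1) + β n * u n)
    (hdom : ∀ᶠ n in atTop, α n * B + β n ≤ B ^ 2) :
    ∃ C, ∀ n, u n ≤ C * B ^ n := by
  obtain ⟨N, hN⟩ := eventually_atTop.mp hdom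
  set C := ∑ i ∈ Finset.range (N + 2), |u i| / B ^ i
  have hC : 0 ≤ C := Finset.sum_nonneg fun i _ => by positivity
  refine ⟨C, fun n => ?_⟩
  induction n using Nat.strong_induction_on with
  | _ n ih =>
    rcases lt_or_ge n (N + 2) with hn | hn
    · calc u n ≤ |u n| / B ^ n * B ^ n := by
            rw [div_mul_cancel₀ _ (by positivity)]
            exact le_abs_self _
        _ ≤ C * B ^ n := by
          gcongr
          exact Finset.single_le_sum (f := fun i => |u i| / B ^ i) (fun i _ => by positivity)
            (Finset.mem_range.mpr hn)
    · obtain ⟨m, rfl⟩ : ∃ m, n = m + 2 := ⟨n - 2, by omega⟩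
      calc u (m + 2) ≤ α m * u (m + 1) + β m * u m := hu m
        _ ≤ α m * (C * B ^ (m + 1)) + β m * (C * B ^ m) := by
          gcongr
          · exact hα m
          · exact ih (m + 1) (by omega)
          · exact hβ m
          · exact ih m (by omega)
        _ = C * B ^ m * (α m * B + β m) := by ring
        _ ≤ C * B ^ m * B ^ 2 := by gcongr; exact hN m (by omega)
        _ = C * B ^ (m + 2) := by ring

def HeunRecurrence (p q : ℝ) (y : ℕ → ℝ) : Prop :=
  ∀ n : ℕ, ((n : ℝ) + 2) * ((n : ℝ) + 2 * q + 2) * y (n + 2) =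
    p * ((n : ℝ) + q + 1) * y (n + 1) + (n : ℝ) * ((n : ℝ) + 2 * q) * y n

namespace HeunRecurrence

variable {p q : ℝ} {y : ℕ → ℝ}

theorem coeff_nonneg (hrec : HeunRecurrence p q y) (hp : 0 ≤ p) (hq : 0 ≤ q) (h0 : 0 ≤ y 0)
    (h1 : 0 ≤ y 1) : ∀ n, 0 ≤ y n := by
  refine Nat.twoStepInduction h0 h1 fun n hn hn1 => ?_
  have hpos : (0 : ℝ) < ((n : ℝ) + 2) * ((n : ℝ) + 2 * q + 2) := by positivity
  refine (mul_nonneg_iff_of_pos_left hpos).mp ?_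
  rw [hrec n]
  positivity

theorem coeff_le (hrec : HeunRecurrence p q y) (hp : 0 ≤ p) (hq : 0 ≤ q) (hy : ∀ n, 0 ≤ y n)
    (n : ℕ) :
    y (n + 2) ≤ p / (n + 1) * y (n + 1) + y n := by
  have hpos : (0 : ℝ) < ((n : ℝ) + 2) * ((n : ℝ) + 2 * q + 2) := by positivity
  refine le_of_mul_le_mul_left ?_ hpos
  have hcoeff₁ : (n : ℝ) + q + 1 ≤ ((n : ℝ) + 2) * ((n : ℝ) + 2 * q + 2) / (n + 1) := by
    rw [le_div_iff₀ (by positivity)]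
    nlinarith
  have hcoeff₀ : (n : ℝ) * ((n : ℝ) + 2 * q) ≤ ((n : ℝ) + 2) * ((n : ℝ) + 2 * q + 2) := by nlinarith
  calc ((n : ℝ) + 2) * ((n : ℝ) + 2 * q + 2) * y (n + 2)
      = p * ((n : ℝ) + q + 1) * y (n + 1) + (n : ℝ) * ((n : ℝ) + 2 * q) * y n := hrec n
    _ ≤ p * (((n : ℝ) + 2) * ((n : ℝ) + 2 * q + 2) / (n + 1)) * y (n + 1)
        + ((n : ℝ) + 2) * ((n : ℝ) + 2 * q + 2) * y n := by
          gcongr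
          · exact hy (n + 1)
          · exact hy n
    _ = ((n : ℝ) + 2) * ((n : ℝ) + 2 * q + 2) * (p / (n + 1) * y (n + 1) + y n) := by ring

theorem one_le_radius (hrec : HeunRecurrence p q y) (hp : 0 ≤ p) (hq : 0 ≤ q) (h0 : 0 ≤ y 0)
    (h1 : 0 ≤ y 1) : 1 ≤ (ofScalars ℝ y).radius := by
  have hy := hrec.coeff_nonneg hp hq h0 h1
  refine ENNReal.le_of_forall_nnreal_lt fun r hr => ?_
  rcases eq_or_ne r 0 with rfl | hr0
  · simp
  have hr0' : (0 : ℝ) < r := by positivity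
  have hr1 : (r : ℝ) < 1 := by exact_mod_cast hr
  have hB : 1 < (r : ℝ)⁻¹ := one_lt_inv₀ hr0' |>.mpr hr1
  have hdom : ∀ᶠ n : ℕ in atTop, p / (n + 1) * (r : ℝ)⁻¹ + 1 ≤ (r : ℝ)⁻¹ ^ 2 := by
    have h := (tendsto_one_div_add_atTop_nhds_zero_nat.const_mul (p * (r : ℝ)⁻¹)).add_const 1
    rw [mul_zero, zero_add] at h
    filter_upwards [h.eventually (eventually_le_nhds (one_lt_pow₀ hB two_ne_zero))] with n hn
    exact le_of_eq_of_le (by ring) hn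
  obtain ⟨C, hC⟩ := exists_le_mul_pow_of_le_add (by positivity) (fun n => by positivity)
    (fun _ => zero_le_one) (fun n => by simpa using hrec.coeff_le hp hq hy n) hdom
  refine (ofScalars ℝ y).le_radius_of_bound C fun n => ?_
  rw [ofScalars_norm, Real.norm_of_nonneg (hy n)]
  calc y n * r ^ n ≤ C * (r : ℝ)⁻¹ ^ n * r ^ n := by gcongr; exact hC n
    _ = C := by rw [mul_assoc, ← mul_pow, inv_mul_cancel₀ hr0'.ne', one_pow, mul_one]

theorem series_identity (hrec : HeunRecurrence p q y) (hinit : (2 * q + 1) * y 1 = p * q * y 0)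
    {z S₀ S₁ S₂ : ℝ}
    (h₀ : HasSum (fun n => y n * z ^ n) S₀)
    (h₁ : HasSum (fun n => derivCoeffs y n * z ^ n) S₁)
    (h₂ : HasSum (fun n => derivCoeffs (derivCoeffs y) n * z ^ n) S₂) :
    z * (z - 1) * (z + 1) * S₂ + ((2 * q + 1) * (z ^ 2 - 1) + p * z) * S₁ + p * q * S₀ = 0 := by
  -- the six monomials of the left-hand side, reindexed so that the `n`-th term carries `z ^ (n + 1)`
  have e₂ : HasSum (fun n : ℕ => (n : ℝ) * (n - 1) * y n * z ^ (n + 1)) (z ^ 3 * S₂) := by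
    refine hasSum_of_hasSum_nat_add 2 (by intro i hi; interval_cases i <;> simp) ?_
    refine (h₂.mul_left (z ^ 3)).congr_fun fun n => ?_
    simp only [derivCoeffs]
    push_cast
    ring
  have e₂' : HasSum (fun n => derivCoeffs (derivCoeffs y) n * z ^ (n + 1)) (z * S₂) :=
    (h₂.mul_left z).congr_fun fun n => by ring
  have e₁ : HasSum (fun n : ℕ => (n : ℝ) * y n * z ^ (n + 1)) (z ^ 2 * S₁) := by
    refine hasSum_of_hasSum_nat_add 1 (by simp) ?_
    refine (h₁.mul_left (z ^ 2)).congr_fun fun n => ?_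
    simp only [derivCoeffs]
    push_cast
    ring
  have e₁' : HasSum (fun n => derivCoeffs y (n + 1) * z ^ (n + 1)) (S₁ - y 1) := by
    simpa [derivCoeffs] using (hasSum_nat_add_iff' 1).mpr h₁
  have e₁'' : HasSum (fun n => derivCoeffs y n * z ^ (n + 1)) (z * S₁) :=
    (h₁.mul_left z).congr_fun fun n => by ring
  have e₀ : HasSum (fun n => y (n + 1) * z ^ (n + 1)) (S₀ - y 0) := by
    simpa using (hasSum_nat_add_iff' 1).mpr h₀
  have hsum := (((e₂.sub e₂').add ((e₁.sub e₁').mul_left (2 * q + 1))).add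
    (e₁''.mul_left p)).add (e₀.mul_left (p * q))
  have hzero := hsum.unique <| hasSum_zero.congr_fun fun n => by
    simp only [derivCoeffs]
    push_cast
    linear_combination (-(z ^ (n + 1))) * hrec n
  linear_combination hzero - hinit

end HeunRecurrence

/-- **The Heun series solves the Heun-type differential equation.**
For `p, q > 0`, the sum `y(z) = ∑ yₙ zⁿ` of the series with `y₀ = 1`,
`y₁ = pq/(2q+1)` and `(n+2)(n+2q+2) y_{n+2} = p(n+q+1) y_{n+1} + n(n+2q) yₙ`
is twice differentiable on `(0,1)` and satisfies there
`y'' + [(2q+1)/z + (p/2)/(z-1) + (-p/2)/(z+1)] y' + (pq/(z(z-1)(z+1))) y = 0`. -/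
theorem heun_series_solves_ode
    (p q : ℝ) (hp : 0 < p) (hq : 0 < q) (y : ℕ → ℝ)
    (h0 : y 0 = 1) (h1 : y 1 = p * q / (2 * q + 1))
    (hrec : ∀ n : ℕ,
      ((n : ℝ) + 2) * ((n : ℝ) + 2 * q + 2) * y (n + 2) =
        p * ((n : ℝ) + q + 1) * y (n + 1) + (n : ℝ) * ((n : ℝ) + 2 * q) * y n)
    (Y : ℝ → ℝ) (hY : Y = fun z => ∑' n : ℕ, y n * z ^ n) :
    ∀ z ∈ Set.Ioo (0:ℝ) 1,
      DifferentiableAt ℝ Y z ∧ DifferentiableAt ℝ (deriv Y) z ∧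
        deriv (deriv Y) z +
            ((2 * q + 1) / z + (p / 2) / (z - 1) + (-(p / 2)) / (z + 1)) *
              deriv Y z +
            (p * q / (z * (z - 1) * (z + 1))) * Y z = 0 := by
  have hinit : (2 * q + 1) * y 1 = p * q * y 0 := by
    rw [h1, h0]
    field_simp
  have hR := HeunRecurrence.one_le_radius hrec hp.le hq.le (h0 ▸ zero_le_one) (h1 ▸ by positivity)
  rintro z ⟨hz0, hz1⟩
  have hz : ‖z‖ₑ < (ofScalars ℝ y).radius := by
    refine lt_of_lt_of_le ?_ hR
    rw [Real.enorm_eq_ofReal_abs, abs_of_pos hz0]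
    exact ENNReal.ofReal_lt_one.mpr hz1
  have hz₁ := hz.trans_le (radius_ofScalars_le_derivCoeffs y)
  have hz₂ := hz₁.trans_le (radius_ofScalars_le_derivCoeffs _)
  have hY' := hasDerivAt_tsum_mul_pow hz
  have hY'' := hasDerivAt_deriv_tsum_mul_pow hz
  subst hY
  refine ⟨hY'.differentiableAt, hY''.differentiableAt, ?_⟩
  have key := HeunRecurrence.series_identity hrec hinit (summable_mul_pow_of_lt_radius hz).hasSum
    (summable_mul_pow_of_lt_radius hz₁).hasSum (summable_mul_pow_of_lt_radius hz₂).hasSum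
  rw [hY''.deriv, hY'.deriv]
  have hz1ne : z - 1 ≠ 0 := by linarith
  field_simp
  linear_combination 2 * key
end

section
/- Let a, b, c be real numbers such that none of c, c + 1, c + 2 is a nonpositive integer, and let t be real with |t| < 1. Then the contiguity relation t·(1 − t)·(a + 1)·(b + 1)·₂F₁(a + 2, b + 2; c + 2; t) + [ c − (a + b + 1)·t ]·(c + 1)·₂F₁(a + 1, b + 1; c + 1; t) − c·(c + 1)·₂F₁(a, b; c; t) = 0 holds. -/
/-- The Pochhammer rising factorial `(a)ₙ = a (a+1) ⋯ (a+n-1)`. -/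
noncomputable def poch (a : ℝ) : ℕ → ℝ
  | 0 => 1
  | n + 1 => poch a n * (a + n)

/-- The Gauss hypergeometric function `₂F₁(a, b; c; x)`, defined for `|x| < 1`
by the convergent power series `∑ (a)ₙ (b)ₙ / (c)ₙ · xⁿ/n!`. -/
noncomputable def hyp2F1 (a b c x : ℝ) : ℝ :=
  ∑' n : ℕ, poch a n * poch b n / poch c n * x ^ n / (Nat.factorial n : ℝ)

/-!
Write `F = ₂F₁(a, b; c; t)`, `G = ₂F₁(a+1, b+1; c+1; t)` and `G'` for the term-wise derivative of
`G`, which is `(a+1)(b+1)/(c+1) · ₂F₁(a+2, b+2; c+2; t)`. The relation is `(c+1)` times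
`c F = (c - (a+b+1) t) G + t (1-t) G'`. Comparing coefficients of `tⁿ⁺¹`, the latter is the identity
`(c+n+1) gₙ₊₁ - c fₙ₊₁ = (a+b+1+n) gₙ` between the coefficients `f` of `F` and `g` of `G`, which
follows from `(a)ₙ₊₁ = a (a+1)ₙ`. All series converge for `|t| < 1` by the ratio test.
-/

open Filter Topology

lemma poch_succ (a : ℝ) (n : ℕ) : poch a (n + 1) = poch a n * (a + n) := rfl

lemma poch_succ_left (a : ℝ) (n : ℕ) : poch a (n + 1) = a * poch (a + 1) n := by
  induction n with
  | zero => simp [poch]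
  | succ n ih =>
    rw [poch_succ, ih, poch_succ]
    push_cast
    ring

theorem summable_of_succ_eq_smul {𝕜 E : Type*} [NormedField 𝕜] [NormedAddCommGroup E]
    [NormedSpace 𝕜 E] [CompleteSpace E] {f : ℕ → E} {r : ℕ → 𝕜} {ρ : 𝕜}
    (hr : Tendsto r atTop (𝓝 ρ)) (hρ : ‖ρ‖ < 1) (hf : ∀ n, f (n + 1) = r n • f n) :
    Summable f := by
  obtain ⟨q, hρq, hq⟩ := exists_between hρ
  refine summable_of_ratio_norm_eventually_le hq ?_
  filter_upwards [hr.norm.eventually_lt_const hρq] with n hn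
  rw [hf, norm_smul]
  exact mul_le_mul_of_nonneg_right hn.le (norm_nonneg _)

theorem HasSum.mul_pow_of_succ {R : Type*} [CommRing R] [TopologicalSpace R] [IsTopologicalRing R]
    {f : ℕ → R} {t s : R} (h : HasSum (fun n => f (n + 1) * t ^ n) s) :
    HasSum (fun n => f n * t ^ n) (f 0 + t * s) := by
  have h' : HasSum (fun n => f (n + 1) * t ^ (n + 1)) (t * s) := by
    simpa only [pow_succ', mul_left_comm] using h.mul_left t
  simpa [add_comm] using (hasSum_nat_add_iff (f := fun n => f n * t ^ n) 1).mp h'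

noncomputable def hyp2F1Coeff (a b c : ℝ) (n : ℕ) : ℝ :=
  poch a n * poch b n / poch c n / n.factorial

lemma hyp2F1Coeff_zero (a b c : ℝ) : hyp2F1Coeff a b c 0 = 1 := by
  simp [hyp2F1Coeff, poch]

lemma hyp2F1Coeff_succ (a b c : ℝ) (n : ℕ) :
    hyp2F1Coeff a b c (n + 1) =
      (a + n) * (b + n) / ((c + n) * (n + 1)) * hyp2F1Coeff a b c n := by
  simp only [hyp2F1Coeff, poch_succ, Nat.factorial_succ, Nat.cast_mul, div_eq_mul_inv, mul_inv]
  push_cast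
  ring

lemma hyp2F1Coeff_succ_left (a b c : ℝ) (n : ℕ) :
    hyp2F1Coeff a b c (n + 1) = a * b / (c * (n + 1)) * hyp2F1Coeff (a + 1) (b + 1) (c + 1) n := by
  simp only [hyp2F1Coeff, poch_succ_left, Nat.factorial_succ, Nat.cast_mul, div_eq_mul_inv, mul_inv]
  push_cast
  ring

lemma tendsto_hyp2F1_ratio (a b c : ℝ) :
    Tendsto (fun n : ℕ => (a + n) * (b + n) / ((c + n) * (n + 1))) atTop (𝓝 1) := by
  have ha := tendsto_add_mul_div_add_mul_atTop_nhds a c 1 one_ne_zero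
  have hb := tendsto_add_mul_div_add_mul_atTop_nhds b 1 1 one_ne_zero
  simpa [div_mul_div_comm, add_comm] using ha.mul hb

/-- No condition on `c` is needed: past a pole of `(c)ₙ` the terms are junk values `x / 0 = 0`. -/
theorem hasSum_hyp2F1 (a b c : ℝ) {t : ℝ} (ht : |t| < 1) :
    HasSum (fun n => hyp2F1Coeff a b c n * t ^ n) (hyp2F1 a b c t) := by
  have hsum : Summable (fun n => hyp2F1Coeff a b c n * t ^ n) := by
    refine summable_of_succ_eq_smul ((tendsto_hyp2F1_ratio a b c).mul_const t)
      (by simpa using ht) fun n => ?_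
    rw [hyp2F1Coeff_succ, smul_eq_mul, pow_succ]
    ring
  convert hsum.hasSum using 1
  exact tsum_congr fun n => by simp only [hyp2F1Coeff]; ring

theorem hasSum_succ_mul_hyp2F1Coeff_succ (a b c : ℝ) {t : ℝ} (ht : |t| < 1) :
    HasSum (fun n : ℕ => ((n + 1 : ℕ) : ℝ) * hyp2F1Coeff a b c (n + 1) * t ^ n)
      (a * b / c * hyp2F1 (a + 1) (b + 1) (c + 1) t) := by
  refine ((hasSum_hyp2F1 (a + 1) (b + 1) (c + 1) ht).mul_left (a * b / c)).congr_fun fun n => ?_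
  rw [hyp2F1Coeff_succ_left]
  push_cast
  field_simp

lemma hyp2F1Coeff_contiguity (a b : ℝ) {c : ℝ} (hc : c ≠ 0) (n : ℕ) (hcn : c + 1 + n ≠ 0) :
    (c + (n + 1)) * hyp2F1Coeff (a + 1) (b + 1) (c + 1) (n + 1) - c * hyp2F1Coeff a b c (n + 1) =
      (a + b + 1 + n) * hyp2F1Coeff (a + 1) (b + 1) (c + 1) n := by
  rw [hyp2F1Coeff_succ, hyp2F1Coeff_succ_left]
  field_simp
  ring

theorem mul_hyp2F1_eq (a b : ℝ) {c t : ℝ} (hc : c ≠ 0) (hcn : ∀ n : ℕ, c + 1 + n ≠ 0)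
    (ht : |t| < 1) :
    c * hyp2F1 a b c t = (c - (a + b + 1) * t) * hyp2F1 (a + 1) (b + 1) (c + 1) t +
      t * (1 - t) * ((a + 1) * (b + 1) / (c + 1) * hyp2F1 (a + 2) (b + 2) (c + 2) t) := by
  set f := hyp2F1Coeff a b c
  set g := hyp2F1Coeff (a + 1) (b + 1) (c + 1)
  set G := hyp2F1 (a + 1) (b + 1) (c + 1) t
  set G' := (a + 1) * (b + 1) / (c + 1) * hyp2F1 (a + 2) (b + 2) (c + 2) t
  have hF : HasSum (fun n => f n * t ^ n) (hyp2F1 a b c t) := hasSum_hyp2F1 a b c ht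
  have hG : HasSum (fun n => g n * t ^ n) G := hasSum_hyp2F1 _ _ _ ht
  have hG' : HasSum (fun n : ℕ => ((n + 1 : ℕ) : ℝ) * g (n + 1) * t ^ n) G' := by
    have := hasSum_succ_mul_hyp2F1Coeff_succ (a + 1) (b + 1) (c + 1) ht
    rwa [show a + 1 + 1 = a + 2 by ring, show b + 1 + 1 = b + 2 by ring,
      show c + 1 + 1 = c + 2 by ring] at this
  have hng : HasSum (fun n : ℕ => (n : ℝ) * g n * t ^ n) (t * G') := by
    have := hG'.mul_pow_of_succ (f := fun n : ℕ => (n : ℝ) * g n)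
    rwa [Nat.cast_zero, zero_mul, zero_add] at this
  -- sum `∑ ((c + n) gₙ - c fₙ) tⁿ` in two ways
  have hdirect : HasSum (fun n : ℕ => ((c + n) * g n - c * f n) * t ^ n)
      (c * G + t * G' - c * hyp2F1 a b c t) :=
    ((hG.mul_left c).add hng).sub (hF.mul_left c) |>.congr_fun fun n => by ring
  have hsucc : HasSum (fun n : ℕ => ((c + (n + 1 : ℕ)) * g (n + 1) - c * f (n + 1)) * t ^ n)
      ((a + b + 1) * G + t * G') :=
    ((hG.mul_left (a + b + 1)).add hng).congr_fun fun n => by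
      push_cast
      rw [hyp2F1Coeff_contiguity a b hc n (hcn n)]
      ring
  have hshifted := hsucc.mul_pow_of_succ (f := fun n : ℕ => (c + n) * g n - c * f n)
  have hf0 : f 0 = 1 := hyp2F1Coeff_zero a b c
  have hg0 : g 0 = 1 := hyp2F1Coeff_zero _ _ _
  rw [hf0, hg0, Nat.cast_zero] at hshifted
  linear_combination -hdirect.unique hshifted

theorem hyp2F1_contiguity_general
    (a b c t : ℝ)
    (hc : ∀ n : ℕ, c ≠ -(n : ℝ))
    (hc1 : ∀ n : ℕ, c + 1 ≠ -(n : ℝ))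
    (ht : |t| < 1) :
    t * (1 - t) * (a + 1) * (b + 1) * hyp2F1 (a + 2) (b + 2) (c + 2) t +
        (c - (a + b + 1) * t) * (c + 1) * hyp2F1 (a + 1) (b + 1) (c + 1) t -
        c * (c + 1) * hyp2F1 a b c t = 0 := by
  have hc0 : c ≠ 0 := by simpa using hc 0
  have hcn (n : ℕ) : c + 1 + n ≠ 0 := fun h => hc1 n (by linarith)
  have hc10 : c + 1 ≠ 0 := by simpa using hcn 0
  have := mul_hyp2F1_eq a b hc0 hcn ht
  field_simp at this
  linear_combination -this

/-- **A contiguity relation for the Gauss hypergeometric function:**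
`t(1-t)(a+1)(b+1) ₂F₁(a+2,b+2;c+2;t) + [c-(a+b+1)t](c+1) ₂F₁(a+1,b+1;c+1;t)
  - c(c+1) ₂F₁(a,b;c;t) = 0`. -/
theorem hyp2F1_contiguity
    (a b c t : ℝ)
    (hc : ∀ n : ℕ, c ≠ -(n : ℝ))
    (hc1 : ∀ n : ℕ, c + 1 ≠ -(n : ℝ))
    (hc2 : ∀ n : ℕ, c + 2 ≠ -(n : ℝ))
    (ht : |t| < 1) :
    t * (1 - t) * (a + 1) * (b + 1) * hyp2F1 (a + 2) (b + 2) (c + 2) t +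
        (c - (a + b + 1) * t) * (c + 1) * hyp2F1 (a + 1) (b + 1) (c + 1) t -
        c * (c + 1) * hyp2F1 a b c t = 0 :=
  hyp2F1_contiguity_general a b c t hc hc1 ht
end

section
/- Let p > 0, q > 0, k > 0 and let N be a real number. Define, for z ∈ ℝ, f(z) := ( q·N/(z² + k²) ) · exp[ −q·z + (p/k)·arctan(z/k) ] · ∫_{−∞}^z exp[ q·t − (p/k)·arctan(t/k) ] dt. Then the integral defining f converges for every z, f is differentiable on ℝ, and f satisfies the first-order equation (d/dz)[ (z² + k²)·f(z) ] − p·f(z) + q·(z² + k²)·f(z) = q·N for all z ∈ ℝ. -/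
open MeasureTheory Real Set

/-!
Write `φ z = -q z + (p/k) arctan (z/k)`, so that `φ' z = -q + p/(z² + k²)` and
`(z² + k²) f z = q N · e^{φ z} ∫_{-∞}^z e^{-φ t} dt`. The integrand is at most a constant times
`e^{q t}` because `arctan` is bounded, so the integral converges; and `e^{-φ}` is an integrating
factor: `(e^{φ} ∫_{-∞}^z e^{-φ})' = φ' · e^{φ} ∫_{-∞}^z e^{-φ} + 1`, which is the equation.
-/

theorem integrableOn_Iic_exp_mul_add {q M : ℝ} {h : ℝ → ℝ} (hq : 0 < q) (hh : Continuous h)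
    (hM : ∀ t, h t ≤ M) (z : ℝ) : IntegrableOn (fun t => exp (q * t + h t)) (Iic z) := by
  have hcont : Continuous fun t => exp (q * t + h t) := by fun_prop
  refine ((integrableOn_exp_mul_Iic hq z).const_mul (exp M)).mono' hcont.aestronglyMeasurable
    (ae_of_all _ fun t => ?_)
  rw [norm_of_nonneg (exp_pos _).le, add_comm, exp_add]
  gcongr
  exact hM t

theorem neg_mul_arctan_le (c x : ℝ) : -(c * arctan x) ≤ |c| * (π / 2) := calc
  -(c * arctan x) ≤ |c| * |arctan x| := abs_mul c _ ▸ neg_le_abs _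
  _ ≤ |c| * (π / 2) := by
    gcongr
    exact abs_le.2 ⟨(neg_pi_div_two_lt_arctan x).le, (arctan_lt_pi_div_two x).le⟩

theorem hasDerivAt_integral_Iic {g : ℝ → ℝ} (hg : Continuous g)
    (hint : ∀ z, IntegrableOn g (Iic z)) (z : ℝ) :
    HasDerivAt (fun z => ∫ t in Iic z, g t) (g z) z := by
  have hsplit :
      (fun z => ∫ t in Iic z, g t) = fun z => (∫ t in Iic 0, g t) + ∫ t in 0..z, g t := by
    funext u
    linarith [intervalIntegral.integral_Iic_sub_Iic (hint 0) (hint u)]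
  rw [hsplit]
  exact (intervalIntegral.integral_hasDerivAt_right (hg.intervalIntegrable 0 z)
    hg.stronglyMeasurable.stronglyMeasurableAtFilter hg.continuousAt).const_add _

theorem hasDerivAt_exp_mul_integral_Iic_exp_neg {φ φ' : ℝ → ℝ}
    (hφ : ∀ z, HasDerivAt φ (φ' z) z) (hint : ∀ z, IntegrableOn (fun t => exp (-φ t)) (Iic z))
    (z : ℝ) :
    HasDerivAt (fun z => exp (φ z) * ∫ t in Iic z, exp (-φ t))
      (φ' z * (exp (φ z) * ∫ t in Iic z, exp (-φ t)) + 1) z := by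
  have hcont : Continuous fun t => exp (-φ t) :=
    (continuous_iff_continuousAt.2 fun t => (hφ t).continuousAt).neg.rexp
  refine ((hφ z).exp.mul (hasDerivAt_integral_Iic hcont hint z)).congr_deriv ?_
  rw [← exp_add, add_neg_cancel, exp_zero]
  ring

theorem hasDerivAt_arctan_div {k : ℝ} (hk : k ≠ 0) (z : ℝ) :
    HasDerivAt (fun z => arctan (z / k)) (k / (z ^ 2 + k ^ 2)) z := by
  refine (((hasDerivAt_id' z).div_const k).arctan).congr_deriv ?_
  field_simp
  ring

theorem nieuwenhuizen_stationary_density_general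
    (p q k N : ℝ) (hq : 0 < q) (hk : 0 < k)
    (f : ℝ → ℝ)
    (hf : ∀ z : ℝ, f z =
      q * N / (z ^ 2 + k ^ 2) *
        Real.exp (-(q * z) + (p / k) * Real.arctan (z / k)) *
        ∫ t in Set.Iic z, Real.exp (q * t - (p / k) * Real.arctan (t / k))) :
    (∀ z : ℝ, IntegrableOn
        (fun t => Real.exp (q * t - (p / k) * Real.arctan (t / k))) (Set.Iic z)) ∧
    Differentiable ℝ f ∧
    (∀ z : ℝ, deriv (fun z => (z ^ 2 + k ^ 2) * f z) z - p * f z +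
        q * (z ^ 2 + k ^ 2) * f z = q * N) := by
  set φ : ℝ → ℝ := fun z => -(q * z) + p / k * arctan (z / k)
  have hφ (z : ℝ) : HasDerivAt φ (-q + p / (z ^ 2 + k ^ 2)) z := by
    refine (((hasDerivAt_id' z).const_mul q).neg.add
      ((hasDerivAt_arctan_div hk.ne' z).const_mul (p / k))).congr_deriv ?_
    field_simp
  have hint (z : ℝ) : IntegrableOn (fun t => exp (q * t - p / k * arctan (t / k))) (Iic z) := by
    simpa only [← sub_eq_add_neg] using integrableOn_Iic_exp_mul_add hq (by fun_prop)
      (fun t => neg_mul_arctan_le (p / k) (t / k)) z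
  have hneg : (fun t => exp (-φ t)) = fun t => exp (q * t - p / k * arctan (t / k)) := by
    funext t; congr 1; ring
  set G : ℝ → ℝ := fun z => exp (φ z) * ∫ t in Iic z, exp (-φ t)
  have hG (z : ℝ) : HasDerivAt G ((-q + p / (z ^ 2 + k ^ 2)) * G z + 1) z :=
    hasDerivAt_exp_mul_integral_Iic_exp_neg hφ (hneg ▸ hint) z
  have hfG : f = fun z => q * N / (z ^ 2 + k ^ 2) * G z := by
    funext z; rw [hf, mul_assoc, ← hneg]
  have hden (z : ℝ) : z ^ 2 + k ^ 2 ≠ 0 := by positivity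
  refine ⟨hint, ?_, fun z => ?_⟩
  · rw [hfG]
    intro z
    have := (hG z).differentiableAt
    fun_prop (disch := exact hden z)
  · have hmul : (fun z => (z ^ 2 + k ^ 2) * f z) = fun z => q * N * G z := by
      funext z; rw [hfG]; field_simp
    rw [hmul, ((hG z).const_mul (q * N)).deriv, hfG]
    field_simp
    ring

/-- **Nieuwenhuizen's solution of the Frisch–Lloyd equation for exponentially
distributed delta-scatterer strengths at energy `E = k² > 0`.**
The function
`f(z) = (qN/(z²+k²)) e^{-qz + (p/k) arctan(z/k)} ∫_{-∞}^z e^{qt - (p/k) arctan(t/k)} dt`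
is well defined (the integral converges), is differentiable, and satisfies
`(d/dz)[(z²+k²) f] - p f + q (z²+k²) f = qN` on all of `ℝ`. -/
theorem nieuwenhuizen_stationary_density
    (p q k N : ℝ) (hp : 0 < p) (hq : 0 < q) (hk : 0 < k)
    (f : ℝ → ℝ)
    (hf : ∀ z : ℝ, f z =
      q * N / (z ^ 2 + k ^ 2) *
        Real.exp (-(q * z) + (p / k) * Real.arctan (z / k)) *
        ∫ t in Set.Iic z, Real.exp (q * t - (p / k) * Real.arctan (t / k))) :
    (∀ z : ℝ, IntegrableOn
        (fun t => Real.exp (q * t - (p / k) * Real.arctan (t / k))) (Set.Iic z)) ∧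
    Differentiable ℝ f ∧
    (∀ z : ℝ, deriv (fun z => (z ^ 2 + k ^ 2) * f z) z - p * f z +
        q * (z ^ 2 + k ^ 2) * f z = q * N) :=
  nieuwenhuizen_stationary_density_general p q k N hq hk f hf
end
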